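/- arXiv:2404.09399 — 3 statements merged into one kernel-verified Lean document; each statement's English description precedes it below -/
import Mathlib

section
/- Let d = p² with p prime. The real span of A ∪ B ∪ C inside the real vector space of self-adjoint d×d complex matrices has dimension 3p² − 2p. -/
open Complex Matrix
open scoped ComplexOrder

noncomputable section

/-- `omega n = exp(2 π i / n)`, a primitive `n`-th root of unity. -/
def omega (n : ℕ) : ℂ := Complex.exp (2 * Real.pi * Complex.I / n)

/-- The standard basis vector `a i` of `ℂ^d`. -/
def stdVec (d : ℕ) (i : Fin d) : Fin d → ℂ := fun k => if k = i then 1 else 0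

/-- The Fourier (DFT) basis vector `b j = (1/√d) ∑ i, ω_d^(i j) • a i`. -/
def fourierVec (d : ℕ) (j : Fin d) : Fin d → ℂ :=
  fun i => ((1 / Real.sqrt d : ℝ) : ℂ) * omega d ^ (i.val * j.val)

/-- The rank-one projector `|v⟩⟨v|` of a vector `v`, as a matrix. -/
def proj (d : ℕ) (v : Fin d → ℂ) : Matrix (Fin d) (Fin d) ℂ :=
  Matrix.of fun i k => v i * (starRingEnd ℂ) (v k)

/-- The Kirkwood-Dirac quasiprobability `Q i j F = ⟨b j|a i⟩ * ⟨a i|F|b j⟩`. -/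
def KDQ (d : ℕ) (F : Matrix (Fin d) (Fin d) ℂ) (i j : Fin d) : ℂ :=
  (starRingEnd ℂ) (fourierVec d j i) * ∑ k, F i k * fourierVec d j k

/-- The set `KD⁺` of KD classical density matrices: positive semidefinite, trace one,
and all KD quasiprobabilities are nonnegative reals. -/
def KDplus (d : ℕ) : Set (Matrix (Fin d) (Fin d) ℂ) :=
  {ρ | ρ.PosSemidef ∧ ρ.trace = 1 ∧
    ∀ i j, (KDQ d ρ i j).im = 0 ∧ 0 ≤ (KDQ d ρ i j).re}

/-- The set `KD^r` of self-adjoint operators whose KD distribution is everywhere real. -/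
def KDr (d : ℕ) : Set (Matrix (Fin d) (Fin d) ℂ) :=
  {F | F.IsHermitian ∧ ∀ i j, (KDQ d F i j).im = 0}

/-- `A = {|a i⟩⟨a i| : i ∈ ℤ_d}`. -/
def setA (d : ℕ) : Set (Matrix (Fin d) (Fin d) ℂ) :=
  {M | ∃ i : Fin d, M = proj d (stdVec d i)}

/-- `B = {|b j⟩⟨b j| : j ∈ ℤ_d}`. -/
def setB (d : ℕ) : Set (Matrix (Fin d) (Fin d) ℂ) :=
  {M | ∃ j : Fin d, M = proj d (fourierVec d j)}

/-- For `d = p * q` : `ψ m s = (1/√q) ∑ k ∈ ℤ_q, ω_q^(s k) • a (k p + m)`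
(so the `i`-th coordinate is nonzero iff `i ≡ m [MOD p]`, with `k = i / p`). -/
def psiPQ (d p q : ℕ) (m : Fin p) (s : Fin q) : Fin d → ℂ :=
  fun i => if i.val % p = m.val then
    ((1 / Real.sqrt q : ℝ) : ℂ) * omega q ^ (s.val * (i.val / p)) else 0

/-- For `d = p * q` : `φ m' s' = (1/√p) ∑ k ∈ ℤ_p, ω_p^(s' k) • a (k q + m')`. -/
def phiPQ (d p q : ℕ) (m' : Fin q) (s' : Fin p) : Fin d → ℂ :=
  fun i => if i.val % q = m'.val then
    ((1 / Real.sqrt p : ℝ) : ℂ) * omega p ^ (s'.val * (i.val / q)) else 0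

/-- For `d = p ^ 2` : `C = {|ψ m s⟩⟨ψ m s| : m, s ∈ ℤ_p}`. -/
def setC2 (d p : ℕ) : Set (Matrix (Fin d) (Fin d) ℂ) :=
  {M | ∃ m s : Fin p, M = proj d (psiPQ d p p m s)}

/-- For `d = p * q` : `C = {|ψ m s⟩⟨ψ m s| : m ∈ ℤ_p, s ∈ ℤ_q}`. -/
def setC (d p q : ℕ) : Set (Matrix (Fin d) (Fin d) ℂ) :=
  {M | ∃ (m : Fin p) (s : Fin q), M = proj d (psiPQ d p q m s)}

/-- For `d = p * q` : `D = {|φ m' s'⟩⟨φ m' s'| : m' ∈ ℤ_q, s' ∈ ℤ_p}`. -/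
def setD (d p q : ℕ) : Set (Matrix (Fin d) (Fin d) ℂ) :=
  {M | ∃ (m' : Fin q) (s' : Fin p), M = proj d (phiPQ d p q m' s')}

/-- Matrix entries in the Fourier basis: `⟨b k|G|b j⟩`. -/
def entryB (d : ℕ) (G : Matrix (Fin d) (Fin d) ℂ) (k j : Fin d) : ℂ :=
  ∑ i, ∑ l, (starRingEnd ℂ) (fourierVec d k i) * G i l * fourierVec d j l


/-!
For `d = p q` the projectors obey two families of relations: for each `m`, the sum
`∑ₛ |ψ m s⟩⟨ψ m s|` is the projector onto the span of the `a (m + p k)`, and for each `s`,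
`∑ₘ |ψ m s⟩⟨ψ m s| = ∑ₜ |b (s + q t)⟩⟨b (s + q t)|`. They express each `|ψ m 0⟩⟨ψ m 0|` and
each `|b j⟩⟨b j|` with `j < q` through the others, so `A`, the `b j` with `j ≥ q` and the
`ψ m s` with `s ≠ 0` span. These `d + (d - q) + p (q - 1)` projectors are independent. In a
vanishing combination, the entries `(t, 0)` with `p ∤ t` say that the Fourier transform of the
`B`-coefficients is supported on multiples of `p`, so they are `q`-periodic and hence zero. The
entries `(m + p u, m)` with `u ≠ 0` then say that the Fourier transform of `s ↦ γ m s` is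
supported at `0`, so it is constant and hence zero. The diagonal finally kills the
`A`-coefficients.
-/

lemma omega_ne_zero (n : ℕ) : omega n ≠ 0 := Complex.exp_ne_zero _

lemma isPrimitiveRoot_omega {n : ℕ} (hn : n ≠ 0) : IsPrimitiveRoot (omega n) n :=
  Complex.isPrimitiveRoot_exp n hn

lemma omega_zpow_eq_one_iff {n : ℕ} (hn : n ≠ 0) (c : ℤ) :
    omega n ^ c = 1 ↔ (n : ℤ) ∣ c :=
  (isPrimitiveRoot_omega hn).zpow_eq_one_iff_dvd c

lemma omega_zpow_eq_zpow_of_dvd {n : ℕ} (hn : n ≠ 0) {a b : ℤ} (h : (n : ℤ) ∣ a - b) :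
    omega n ^ a = omega n ^ b := by
  rw [← sub_add_cancel a b, zpow_add₀ (omega_ne_zero n), (omega_zpow_eq_one_iff hn _).2 h,
    one_mul]

lemma conj_omega_zpow (n : ℕ) (c : ℤ) : starRingEnd ℂ (omega n ^ c) = omega n ^ (-c) := by
  rw [omega, ← Complex.exp_int_mul, ← Complex.exp_int_mul, ← Complex.exp_conj]
  congr 1
  simp only [map_mul, map_div₀, Complex.conj_I, map_ofNat, Complex.conj_ofReal, map_intCast,
    map_natCast]
  push_cast
  ring

lemma omega_zpow_mul_of_eq_mul {d a b : ℕ} (h : d = a * b) (ha : a ≠ 0) (c : ℤ) :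
    omega d ^ ((a : ℤ) * c) = omega b ^ c := by
  rw [_root_.zpow_mul, omega, omega, ← Complex.exp_int_mul, h]
  congr 1
  push_cast
  field_simp

lemma sum_omega_zpow_mul {n : ℕ} (hn : 0 < n) (c : ℤ) :
    ∑ t : Fin n, omega n ^ (c * t) = if (n : ℤ) ∣ c then (n : ℂ) else 0 := by
  simp only [_root_.zpow_mul, zpow_natCast]
  rw [Fin.sum_univ_eq_sum_range (fun t => (omega n ^ c) ^ t) n]
  split_ifs with h
  · simp [(omega_zpow_eq_one_iff hn.ne' c).2 h]
  · have hpow : (omega n ^ c) ^ n = 1 := by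
      rw [← zpow_natCast, ← _root_.zpow_mul, mul_comm, _root_.zpow_mul, zpow_natCast,
        (isPrimitiveRoot_omega hn.ne').pow_eq_one, _root_.one_zpow]
    rw [geom_sum_eq (mt (omega_zpow_eq_one_iff hn.ne' c).1 h), hpow, sub_self, zero_div]

lemma natCast_dvd_sub_iff_eq {n a b : ℕ} (ha : a < n) (hb : b < n) :
    (n : ℤ) ∣ (a : ℤ) - b ↔ a = b :=
  ⟨fun h => Nat.ModEq.eq_of_lt_of_lt (Nat.modEq_iff_dvd.2 h).symm ha hb, fun h => by simp [h]⟩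

def dft (n : ℕ) (v : Fin n → ℂ) (t : Fin n) : ℂ :=
  ∑ j, v j * omega n ^ ((t : ℤ) * j)

lemma sum_dft_mul_omega_zpow {n : ℕ} (hn : 0 < n) (v : Fin n → ℂ) (j₀ : Fin n) :
    ∑ t, dft n v t * omega n ^ (-((t : ℤ) * j₀)) = n * v j₀ := by
  have hdelta : ∀ j : Fin n, ((n : ℤ) ∣ (j : ℤ) - j₀) ↔ j = j₀ := fun j =>
    (natCast_dvd_sub_iff_eq j.isLt j₀.isLt).trans Fin.val_inj
  simp only [dft, Finset.sum_mul]
  rw [Finset.sum_comm]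
  simp only [mul_assoc, ← Finset.mul_sum, ← zpow_add₀ (omega_ne_zero n),
    show ∀ t j : Fin n, (t : ℤ) * j + -((t : ℤ) * j₀) = ((j : ℤ) - j₀) * t from
      fun t j => by ring, sum_omega_zpow_mul hn, hdelta]
  simp [mul_comm]

lemma eq_of_dft_eq_zero {n : ℕ} (hn : 0 < n) (v : Fin n → ℂ) (j₀ j₁ : Fin n)
    (h : ∀ t : Fin n, ¬ (n : ℤ) ∣ t * ((j₀ : ℤ) - j₁) → dft n v t = 0) :
    v j₀ = v j₁ := by
  have hterm : ∀ t : Fin n, dft n v t * omega n ^ (-((t : ℤ) * j₀)) =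
      dft n v t * omega n ^ (-((t : ℤ) * j₁)) := by
    intro t
    by_cases ht : (n : ℤ) ∣ t * ((j₀ : ℤ) - j₁)
    · have hdvd : (n : ℤ) ∣ -((t : ℤ) * j₀) - -((t : ℤ) * j₁) := by
        rw [show -((t : ℤ) * j₀) - -((t : ℤ) * j₁) = -(t * ((j₀ : ℤ) - j₁)) by ring]
        exact ht.neg_right
      rw [omega_zpow_eq_zpow_of_dvd hn.ne' hdvd]
    · rw [h t ht, zero_mul, zero_mul]
  have hsum := Finset.sum_congr rfl fun t (_ : t ∈ Finset.univ) => hterm t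
  rw [sum_dft_mul_omega_zpow hn, sum_dft_mul_omega_zpow hn] at hsum
  exact mul_left_cancel₀ (Nat.cast_ne_zero.2 hn.ne') hsum

lemma proj_stdVec_apply (d : ℕ) (i x y : Fin d) :
    proj d (stdVec d i) x y = if x = i ∧ y = i then 1 else 0 := by
  simp only [proj, stdVec, Matrix.of_apply]
  split_ifs <;> simp_all

lemma scaled_omega_pow_mul_conj (n a b : ℕ) :
    ((1 / Real.sqrt n : ℝ) : ℂ) * omega n ^ a *
        starRingEnd ℂ (((1 / Real.sqrt n : ℝ) : ℂ) * omega n ^ b) =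
      omega n ^ ((a : ℤ) - b) / n := by
  have hsq : ((1 / Real.sqrt n : ℝ) : ℂ) * ((1 / Real.sqrt n : ℝ) : ℂ) = 1 / n := by
    rw [← Complex.ofReal_mul, div_mul_div_comm, one_mul,
      Real.mul_self_sqrt (Nat.cast_nonneg n)]
    push_cast
    rfl
  rw [map_mul, Complex.conj_ofReal, ← zpow_natCast, ← zpow_natCast, conj_omega_zpow,
    mul_mul_mul_comm, hsq, ← zpow_add₀ (omega_ne_zero n), sub_eq_add_neg, one_div_mul_eq_div]

lemma proj_fourierVec_apply (d : ℕ) (j x y : Fin d) :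
    proj d (fourierVec d j) x y = omega d ^ (((x : ℤ) - y) * j) / d := by
  simp only [proj, Matrix.of_apply, fourierVec]
  rw [scaled_omega_pow_mul_conj]
  push_cast
  ring_nf

lemma proj_psiPQ_apply (d p q : ℕ) (m : Fin p) (s : Fin q) (x y : Fin d) :
    proj d (psiPQ d p q m s) x y =
      if x.val % p = m ∧ y.val % p = m then
        omega q ^ ((((x.val / p : ℕ) : ℤ) - (y.val / p : ℕ)) * s) / q
      else 0 := by
  simp only [proj, psiPQ, Matrix.of_apply]
  split_ifs
  · rw [scaled_omega_pow_mul_conj]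
    push_cast
    ring_nf
  all_goals simp_all

def finAddMul {d a b : ℕ} (h : d = a * b) (m : Fin a) (k : Fin b) : Fin d :=
  ⟨m + a * k, by
    subst h
    calc (m : ℕ) + a * k < a + a * k := by omega
      _ = a * (k + 1) := by ring
      _ ≤ a * b := Nat.mul_le_mul_left a k.isLt⟩

lemma eq_finAddMul_iff {d a b : ℕ} (h : d = a * b) (m : Fin a) (k : Fin b) (x : Fin d) :
    x = finAddMul h m k ↔ x.val % a = m ∧ x.val / a = k := by
  have ha : 0 < a := Nat.pos_of_ne_zero (by rintro rfl; exact m.elim0)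
  rw [Fin.ext_iff, show (finAddMul h m k : ℕ) = m + a * k from rfl]
  constructor
  · rintro hx
    simp only [hx, Nat.add_mul_mod_self_left, Nat.mod_eq_of_lt m.isLt,
      Nat.add_mul_div_left _ _ ha, Nat.div_eq_of_lt m.isLt, zero_add, and_self]
  · rintro ⟨hm, hk⟩
    rw [← hm, ← hk, Nat.mod_add_div]

lemma natCast_sub_eq_mul_sub_div_of_mod_eq {n a b : ℕ} (h : a % n = b % n) :
    (a : ℤ) - b = n * (((a / n : ℕ) : ℤ) - (b / n : ℕ)) := by
  have ha : ((a % n : ℕ) : ℤ) + n * (a / n : ℕ) = a := by exact_mod_cast Nat.mod_add_div a n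
  have hb : ((b % n : ℕ) : ℤ) + n * (b / n : ℕ) = b := by exact_mod_cast Nat.mod_add_div b n
  rw [h] at ha
  linear_combination hb - ha

section Relations

variable {d p q : ℕ}

lemma sum_proj_stdVec_finAddMul_apply (hd : d = p * q) (m : Fin p) (x y : Fin d) :
    (∑ k : Fin q, proj d (stdVec d (finAddMul hd m k))) x y =
      if x = y ∧ x.val % p = m then 1 else 0 := by
  rw [Matrix.sum_apply]
  simp only [proj_stdVec_apply, eq_finAddMul_iff]
  split_ifs with hxy
  · obtain ⟨rfl, hm⟩ := hxy
    have hk : x.val / p < q := Nat.div_lt_of_lt_mul (hd ▸ x.isLt)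
    rw [Finset.sum_eq_single ⟨x.val / p, hk⟩
      (fun k _ hk' => if_neg fun h => hk' (Fin.ext h.1.2.symm))
      (fun h => absurd (Finset.mem_univ _) h)]
    simp [hm]
  · refine Finset.sum_eq_zero fun k _ => if_neg ?_
    rintro ⟨⟨hxm, hxk⟩, hym, hyk⟩
    exact hxy ⟨Fin.ext ((Nat.ext_div_modEq_iff p _ _).2
      ⟨hxk.trans hyk.symm, hxm.trans hym.symm⟩), hxm⟩

lemma sum_proj_psiPQ_right_apply (hd : d = p * q) (hq : 0 < q) (m : Fin p) (x y : Fin d) :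
    (∑ s : Fin q, proj d (psiPQ d p q m s)) x y = if x = y ∧ x.val % p = m then 1 else 0 := by
  rw [Matrix.sum_apply]
  simp only [proj_psiPQ_apply]
  by_cases hm : x.val % p = m ∧ y.val % p = m
  · have hq' : (q : ℂ) ≠ 0 := Nat.cast_ne_zero.2 hq.ne'
    have hdiv : (q : ℤ) ∣ ((x.val / p : ℕ) : ℤ) - (y.val / p : ℕ) ↔ x = y := by
      rw [natCast_dvd_sub_iff_eq (Nat.div_lt_of_lt_mul (hd ▸ x.isLt))
        (Nat.div_lt_of_lt_mul (hd ▸ y.isLt)), Fin.ext_iff, Nat.ext_div_modEq_iff p x.val,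
        Nat.ModEq, hm.1, hm.2]
      simp
    simp only [hm, and_self, and_true, if_true, ← Finset.sum_div, sum_omega_zpow_mul hq, hdiv]
    split_ifs <;> simp [hq']
  · rw [Finset.sum_eq_zero fun s _ => if_neg hm, if_neg]
    rintro ⟨rfl, hx⟩
    exact hm ⟨hx, hx⟩

lemma sum_ite_mod_eq {M : Type*} [AddCommMonoid M] (hp : 0 < p) (f : Fin p → M)
    (x y : Fin d) :
    ∑ m : Fin p, (if x.val % p = m ∧ y.val % p = m then f m else 0) =
      if x.val % p = y.val % p then f ⟨x.val % p, Nat.mod_lt _ hp⟩ else 0 := by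
  split_ifs with hxy
  · rw [Finset.sum_eq_single ⟨x.val % p, Nat.mod_lt _ hp⟩
      (fun m _ hm => if_neg fun h => hm (Fin.ext h.1.symm))
      (fun h => absurd (Finset.mem_univ _) h)]
    simp [hxy]
  · exact Finset.sum_eq_zero fun m _ => if_neg fun h => hxy (h.1.trans h.2.symm)

lemma sum_proj_psiPQ_left_apply (hp : 0 < p) (s : Fin q) (x y : Fin d) :
    (∑ m : Fin p, proj d (psiPQ d p q m s)) x y =
      if x.val % p = y.val % p then
        omega q ^ ((((x.val / p : ℕ) : ℤ) - (y.val / p : ℕ)) * s) / q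
      else 0 := by
  rw [Matrix.sum_apply]
  simp only [proj_psiPQ_apply]
  exact sum_ite_mod_eq hp (fun _ => _) x y

lemma sum_proj_fourierVec_finAddMul_apply (hd : d = q * p) (hp : 0 < p) (hq : 0 < q)
    (s : Fin q) (x y : Fin d) :
    (∑ t : Fin p, proj d (fourierVec d (finAddMul hd s t))) x y =
      if x.val % p = y.val % p then
        omega q ^ ((((x.val / p : ℕ) : ℤ) - (y.val / p : ℕ)) * s) / q
      else 0 := by
  have hd' : d = p * q := hd.trans (mul_comm q p)
  have hterm : ∀ t : Fin p, proj d (fourierVec d (finAddMul hd s t)) x y =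
      omega d ^ (((x : ℤ) - y) * s) * omega p ^ (((x : ℤ) - y) * t) / d := by
    intro t
    rw [proj_fourierVec_apply, ← omega_zpow_mul_of_eq_mul hd hq.ne',
      ← zpow_add₀ (omega_ne_zero d)]
    congr 2
    simp only [finAddMul]
    push_cast
    ring
  rw [Matrix.sum_apply]
  simp only [hterm, ← Finset.sum_div, ← Finset.mul_sum, sum_omega_zpow_mul hp]
  have hmod : (p : ℤ) ∣ (x : ℤ) - y ↔ x.val % p = y.val % p := by
    rw [← Nat.modEq_iff_dvd]
    exact ⟨Nat.ModEq.symm, Nat.ModEq.symm⟩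
  by_cases h : x.val % p = y.val % p
  · rw [if_pos (hmod.2 h), if_pos h, natCast_sub_eq_mul_sub_div_of_mod_eq h, mul_assoc,
      omega_zpow_mul_of_eq_mul hd' hp.ne',
      show (d : ℂ) = p * q by exact_mod_cast hd']
    field_simp
  · rw [if_neg (mt hmod.1 h), if_neg h, mul_zero, zero_div]

lemma sum_proj_psiPQ_right (hd : d = p * q) (hq : 0 < q) (m : Fin p) :
    ∑ s : Fin q, proj d (psiPQ d p q m s) =
      ∑ k : Fin q, proj d (stdVec d (finAddMul hd m k)) := by
  ext x y
  rw [sum_proj_psiPQ_right_apply hd hq, sum_proj_stdVec_finAddMul_apply hd]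

lemma sum_proj_psiPQ_left (hd : d = q * p) (hp : 0 < p) (hq : 0 < q) (s : Fin q) :
    ∑ m : Fin p, proj d (psiPQ d p q m s) =
      ∑ t : Fin p, proj d (fourierVec d (finAddMul hd s t)) := by
  ext x y
  rw [sum_proj_psiPQ_left_apply hp, sum_proj_fourierVec_finAddMul_apply hd hp hq]

end Relations

section Independence

variable {d p q : ℕ}

def combinationABC (d p q : ℕ) (α β : Fin d → ℝ) (γ : Fin p → Fin q → ℝ) :
    Matrix (Fin d) (Fin d) ℂ :=
  ∑ i, α i • proj d (stdVec d i) + ∑ j, β j • proj d (fourierVec d j) +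
    ∑ m, ∑ s, γ m s • proj d (psiPQ d p q m s)

lemma combinationABC_apply (hp : 0 < p) (α β : Fin d → ℝ) (γ : Fin p → Fin q → ℝ)
    (x y : Fin d) :
    combinationABC d p q α β γ x y =
      (if x = y then (α x : ℂ) else 0) +
      (∑ j, (β j : ℂ) * omega d ^ (((x : ℤ) - y) * j)) / d +
      if x.val % p = y.val % p then
        (∑ s, (γ ⟨x.val % p, Nat.mod_lt _ hp⟩ s : ℂ) *
          omega q ^ ((((x.val / p : ℕ) : ℤ) - (y.val / p : ℕ)) * s)) / q
      else 0 := by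
  simp only [combinationABC, Matrix.add_apply, Matrix.sum_apply, Matrix.smul_apply,
    Complex.real_smul, proj_stdVec_apply, proj_fourierVec_apply, proj_psiPQ_apply, mul_ite,
    mul_zero, mul_one, Finset.sum_ite_irrel, Finset.sum_const_zero, ← mul_div_assoc,
    ← Finset.sum_div]
  rw [sum_ite_mod_eq hp]
  congr 2
  rcases eq_or_ne x y with rfl | hxy
  · simp
  · rw [if_neg hxy]
    exact Finset.sum_eq_zero fun i _ => if_neg fun h => hxy (h.1.trans h.2.symm)

lemma dft_eq_zero_of_combinationABC_eq_zero (hp : 0 < p) {α β : Fin d → ℝ}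
    {γ : Fin p → Fin q → ℝ} (h : combinationABC d p q α β γ = 0) (t : Fin d)
    (ht : ¬ p ∣ t.val) : dft d (fun j => (β j : ℂ)) t = 0 := by
  have hentry := congrFun (congrFun h t) ⟨0, t.pos⟩
  have ht0 : t ≠ ⟨0, t.pos⟩ := fun h0 => ht (by simp [h0])
  rw [combinationABC_apply hp, if_neg ht0,
    if_neg (by simpa [Nat.dvd_iff_mod_eq_zero] using ht)] at hentry
  simpa [dft, (Nat.cast_pos.2 t.pos).ne'] using hentry

lemma fourierVec_coeff_eq_of_combinationABC_eq_zero (hd : d = p * q) (hp : 0 < p)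
    (hq : 0 < q) {α β : Fin d → ℝ} {γ : Fin p → Fin q → ℝ}
    (h : combinationABC d p q α β γ = 0) (j : Fin d) :
    β j = β ⟨j.val % q, (Nat.mod_lt _ hq).trans_le (hd ▸ Nat.le_mul_of_pos_left q hp)⟩ := by
  have hd0 : 0 < d := j.pos
  suffices (β j : ℂ) = β ⟨j.val % q, _⟩ by exact_mod_cast this
  refine eq_of_dft_eq_zero hd0 (fun j => (β j : ℂ)) _ _ fun t hdvd => ?_
  refine dft_eq_zero_of_combinationABC_eq_zero hp h t fun ⟨a, ha⟩ => hdvd ?_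
  refine ⟨a * (((j.val / q : ℕ) : ℤ) - (j.val % q / q : ℕ)), ?_⟩
  rw [natCast_sub_eq_mul_sub_div_of_mod_eq (b := j.val % q) (Nat.mod_mod j.val q).symm, ha,
    show (d : ℤ) = p * q by exact_mod_cast hd]
  push_cast
  ring

lemma dft_eq_zero_of_combinationABC_zero_eq_zero (hd : d = p * q) (hq : 0 < q)
    {α : Fin d → ℝ} {γ : Fin p → Fin q → ℝ} (h : combinationABC d p q α 0 γ = 0)
    (m : Fin p) (u : Fin q) (hu : u.val ≠ 0) : dft q (fun s => (γ m s : ℂ)) u = 0 := by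
  have hp : 0 < p := m.pos
  set x := finAddMul hd m u
  set y := finAddMul hd m ⟨0, hq⟩
  obtain ⟨hxm, hxu⟩ := (eq_finAddMul_iff hd m u x).1 rfl
  obtain ⟨hym, hy0⟩ := (eq_finAddMul_iff hd m ⟨0, hq⟩ y).1 rfl
  have hxy : x ≠ y := fun hxy => hu (by rw [← hxu, hxy, hy0])
  have hentry := congrFun (congrFun h x) y
  rw [combinationABC_apply hp, if_neg hxy, if_pos (hxm.trans hym.symm)] at hentry
  have hm : (⟨x.val % p, Nat.mod_lt _ hp⟩ : Fin p) = m := Fin.ext hxm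
  simpa [dft, hm, hxu, hy0, (Nat.cast_pos.2 hq).ne'] using hentry

lemma psiPQ_coeff_eq_of_combinationABC_zero_eq_zero (hd : d = p * q) (hq : 0 < q)
    {α : Fin d → ℝ} {γ : Fin p → Fin q → ℝ} (h : combinationABC d p q α 0 γ = 0)
    (m : Fin p) (s : Fin q) : γ m s = γ m ⟨0, hq⟩ := by
  suffices (γ m s : ℂ) = γ m ⟨0, hq⟩ by exact_mod_cast this
  refine eq_of_dft_eq_zero hq (fun s => (γ m s : ℂ)) _ _ fun u hdvd => ?_
  refine dft_eq_zero_of_combinationABC_zero_eq_zero hd hq h m u fun hu => hdvd ?_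
  simp [hu]

lemma eq_zero_of_combinationABC_eq_zero (hd : d = p * q) (hp : 0 < p) (hq : 0 < q)
    {α β : Fin d → ℝ} {γ : Fin p → Fin q → ℝ} (h : combinationABC d p q α β γ = 0)
    (hβ : ∀ j : Fin d, j.val < q → β j = 0) (hγ : ∀ m s, s.val = 0 → γ m s = 0) :
    α = 0 ∧ β = 0 ∧ γ = 0 := by
  obtain rfl : β = 0 := funext fun j =>
    (fourierVec_coeff_eq_of_combinationABC_eq_zero hd hp hq h j).trans (hβ _ (Nat.mod_lt _ hq))
  obtain rfl : γ = 0 := funext fun m => funext fun s =>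
    (psiPQ_coeff_eq_of_combinationABC_zero_eq_zero hd hq h m s).trans (hγ _ _ rfl)
  refine ⟨funext fun x => ?_, rfl, rfl⟩
  have hentry := congrFun (congrFun h x) x
  rw [combinationABC_apply hp] at hentry
  simpa using hentry

end Independence

lemma Submodule.mem_of_sum_mem {R M ι : Type*} [Ring R] [AddCommGroup M] [Module R M]
    [Fintype ι] [DecidableEq ι] {S : Submodule R M} (f : ι → M) (i₀ : ι)
    (hsum : ∑ i, f i ∈ S) (hf : ∀ i, i ≠ i₀ → f i ∈ S) : f i₀ ∈ S := by
  rw [← Finset.add_sum_erase _ f (Finset.mem_univ i₀)] at hsum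
  exact (S.add_mem_iff_left (S.sum_mem fun i hi => hf i (Finset.ne_of_mem_erase hi))).1 hsum

section Dimension

variable {d p q : ℕ}

def familyABC (d p q : ℕ) : Fin d ⊕ Fin d ⊕ Fin p × Fin q → Matrix (Fin d) (Fin d) ℂ :=
  Sum.elim (fun i => proj d (stdVec d i))
    (Sum.elim (fun j => proj d (fourierVec d j)) fun ms => proj d (psiPQ d p q ms.1 ms.2))

lemma range_familyABC : Set.range (familyABC d p q) = setA d ∪ setB d ∪ setC d p q := by
  ext M
  simp only [familyABC, Set.Sum.elim_range, Set.mem_union, Set.mem_range, setA, setB, setC,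
    Set.mem_ofPred_eq, Prod.exists, eq_comm (a := M), or_assoc]

lemma linearCombination_familyABC (l : Fin d ⊕ Fin d ⊕ Fin p × Fin q →₀ ℝ) :
    Finsupp.linearCombination ℝ (familyABC d p q) l =
      combinationABC d p q (fun i => l (.inl i)) (fun j => l (.inr (.inl j)))
        (fun m s => l (.inr (.inr (m, s)))) := by
  rw [Finsupp.linearCombination_apply,
    Finsupp.sum_fintype l (fun i a => a • familyABC d p q i) fun _ => zero_smul ℝ _]
  simp only [Fintype.sum_sum_type, Fintype.sum_prod_type, familyABC, Sum.elim_inl, Sum.elim_inr,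
    combinationABC, add_assoc]

def reducedIdxABC (d p q : ℕ) : Finset (Fin d ⊕ Fin d ⊕ Fin p × Fin q) :=
  Finset.univ.disjSum <| ({j | q ≤ j.val} : Finset (Fin d)).disjSum
    (Finset.univ ×ˢ ({s | s.val ≠ 0} : Finset (Fin q)))

lemma card_reducedIdxABC (hq : q ≤ d) :
    (reducedIdxABC d p q).card = d + (d - q) + p * (q - 1) := by
  have hB := Finset.card_filter_add_card_filter_not (s := Finset.univ) fun j : Fin d => j.val < q
  have hC := Finset.card_filter_add_card_filter_not (s := Finset.univ) fun s : Fin q => s.val < 1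
  simp only [Fin.card_filter_val_lt, not_lt, Finset.card_univ, Fintype.card_fin,
    Nat.one_le_iff_ne_zero] at hB hC
  simp only [reducedIdxABC, Finset.card_disjSum, Finset.card_product, Finset.card_univ,
    Fintype.card_fin, show ({s | s.val ≠ 0} : Finset (Fin q)).card = q - 1 by omega]
  omega

lemma linearIndepOn_familyABC_reducedIdxABC (hd : d = p * q) (hp : 0 < p) (hq : 0 < q) :
    LinearIndepOn ℝ (familyABC d p q) (reducedIdxABC d p q : Set _) := by
  rw [linearIndepOn_iff]
  intro l hl hcomb
  have hsupp : ∀ i, i ∉ reducedIdxABC d p q → l i = 0 := fun i hi =>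
    Finsupp.notMem_support_iff.1 fun h => hi (hl h)
  rw [linearCombination_familyABC] at hcomb
  obtain ⟨hα, hβ, hγ⟩ := eq_zero_of_combinationABC_eq_zero hd hp hq hcomb
    (fun j hj => hsupp _ (by simpa [reducedIdxABC] using hj))
    (fun m s hs => hsupp _ (by simp [reducedIdxABC, hs]))
  ext (i | j | ⟨m, s⟩)
  · exact congrFun hα i
  · exact congrFun hβ j
  · exact congrFun (congrFun hγ m) s

lemma proj_psiPQ_mem_span_reducedIdxABC (hd : d = p * q) (hq : 0 < q) (m : Fin p)
    (s : Fin q) :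
    proj d (psiPQ d p q m s) ∈
      Submodule.span ℝ (familyABC d p q '' (reducedIdxABC d p q : Set _)) := by
  have hgen : ∀ s : Fin q, s.val ≠ 0 → proj d (psiPQ d p q m s) ∈
      Submodule.span ℝ (familyABC d p q '' (reducedIdxABC d p q : Set _)) := fun s hs =>
    Submodule.subset_span ⟨.inr (.inr (m, s)), by simp [reducedIdxABC, hs], rfl⟩
  by_cases hs : s.val = 0
  · refine Submodule.mem_of_sum_mem (fun s => proj d (psiPQ d p q m s)) s ?_
      fun s' hs' => hgen s' fun h => hs' (Fin.ext (h.trans hs.symm))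
    rw [sum_proj_psiPQ_right hd hq]
    exact Submodule.sum_mem _ fun k _ =>
      Submodule.subset_span ⟨.inl _, by simp [reducedIdxABC], rfl⟩
  · exact hgen s hs

lemma proj_fourierVec_mem_span_reducedIdxABC (hd : d = p * q) (hp : 0 < p) (hq : 0 < q)
    (j : Fin d) :
    proj d (fourierVec d j) ∈
      Submodule.span ℝ (familyABC d p q '' (reducedIdxABC d p q : Set _)) := by
  by_cases hj : q ≤ j.val
  · exact Submodule.subset_span ⟨.inr (.inl j), by simp [reducedIdxABC, hj], rfl⟩
  have hd' : d = q * p := hd.trans (mul_comm p q)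
  set s : Fin q := ⟨j.val, not_le.1 hj⟩
  have hj0 : j = finAddMul hd' s ⟨0, hp⟩ := Fin.ext (by simp [s, finAddMul])
  rw [hj0]
  refine Submodule.mem_of_sum_mem (fun t => proj d (fourierVec d (finAddMul hd' s t))) _ ?_
    fun t ht => Submodule.subset_span ⟨.inr (.inl (finAddMul hd' s t)), ?_, rfl⟩
  · rw [← sum_proj_psiPQ_left hd' hp hq]
    exact Submodule.sum_mem _ fun m _ => proj_psiPQ_mem_span_reducedIdxABC hd hq m s
  · have ht0 : 0 < t.val := Nat.pos_of_ne_zero fun h => ht (Fin.ext h)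
    simp only [reducedIdxABC, Finset.mem_coe, Finset.inr_mem_disjSum, Finset.inl_mem_disjSum,
      Finset.mem_filter, Finset.mem_univ, true_and]
    exact (Nat.le_mul_of_pos_right q ht0).trans (Nat.le_add_left _ _)

lemma span_image_reducedIdxABC (hd : d = p * q) (hp : 0 < p) (hq : 0 < q) :
    Submodule.span ℝ (familyABC d p q '' (reducedIdxABC d p q : Set _)) =
      Submodule.span ℝ (Set.range (familyABC d p q)) := by
  refine le_antisymm (Submodule.span_mono (Set.image_subset_range _ _)) ?_
  rw [Submodule.span_le, Set.range_subset_iff]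
  rintro (i | j | ⟨m, s⟩)
  · exact Submodule.subset_span ⟨.inl i, by simp [reducedIdxABC], rfl⟩
  · exact proj_fourierVec_mem_span_reducedIdxABC hd hp hq j
  · exact proj_psiPQ_mem_span_reducedIdxABC hd hq m s

theorem finrank_span_setA_union_setB_union_setC (hd : d = p * q) (hp : 0 < p) (hq : 0 < q) :
    Module.finrank ℝ (Submodule.span ℝ (setA d ∪ setB d ∪ setC d p q)) = 3 * d - p - q := by
  rw [← range_familyABC, ← span_image_reducedIdxABC hd hp hq, Set.image_eq_range,
    finrank_span_eq_card (linearIndepOn_familyABC_reducedIdxABC hd hp hq)]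
  simp only [Finset.coe_sort_coe, Fintype.card_coe]
  rw [card_reducedIdxABC (hd ▸ Nat.le_mul_of_pos_left q hp), Nat.mul_sub_one, ← hd]
  have hpd : p ≤ d := hd ▸ Nat.le_mul_of_pos_right p hq
  have hqd : q ≤ d := hd ▸ Nat.le_mul_of_pos_left q hp
  omega

end Dimension

/-- For `d = p²` with `p` prime, the real span of `A ∪ B ∪ C`
has dimension `3p² − 2p`. -/
theorem stmt1 (p d : ℕ) (hp : p.Prime) (hd : d = p ^ 2) :
    Module.finrank ℝ (Submodule.span ℝ (setA d ∪ setB d ∪ setC2 d p)) =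
      3 * p ^ 2 - 2 * p := by
  have hdim := finrank_span_setA_union_setB_union_setC (hd.trans (sq p)) hp.pos hp.pos
  rw [setC2, ← setC, hdim, hd]
  omega
end
end

section
/- Let d = pq with p, q distinct primes. The real span of A ∪ B ∪ C ∪ D inside the real vector space of self-adjoint d×d complex matrices has dimension (2p−1)(2q−1). -/
open Complex Matrix
open scoped ComplexOrder

noncomputable section

namespace S7


lemma omega_ne_zero (n : ℕ) : omega n ≠ 0 := Complex.exp_ne_zero _

lemma omega_pow_self {n : ℕ} (hn : n ≠ 0) : omega n ^ n = 1 := by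
  rw [omega, ← Complex.exp_nat_mul]
  have hn' : (n:ℂ) ≠ 0 := by exact_mod_cast hn
  rw [mul_div_cancel₀ _ hn']
  exact Complex.exp_two_pi_mul_I

lemma omega_zpow_self {n : ℕ} (hn : n ≠ 0) : omega n ^ (n:ℤ) = 1 := by
  rw [zpow_natCast]; exact omega_pow_self hn

lemma omega_zpow_of_dvd {n : ℕ} (hn : n ≠ 0) {k : ℤ} (h : (n:ℤ) ∣ k) :
    omega n ^ k = 1 := by
  obtain ⟨l, rfl⟩ := h
  rw [_root_.zpow_mul, omega_zpow_self hn, _root_.one_zpow]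

lemma two_pi_I_ne_zero : (2 * Real.pi * Complex.I : ℂ) ≠ 0 := by
  simp [Real.pi_ne_zero, Complex.I_ne_zero]

lemma omega_zpow_eq_one_iff {n : ℕ} (hn : n ≠ 0) (k : ℤ) :
    omega n ^ k = 1 ↔ (n:ℤ) ∣ k := by
  constructor
  · intro h
    rw [omega, ← Complex.exp_int_mul, Complex.exp_eq_one_iff] at h
    obtain ⟨m, hm⟩ := h
    refine ⟨m, ?_⟩
    have hn' : (n:ℂ) ≠ 0 := by exact_mod_cast hn
    field_simp at hm
    have h2 : ((k:ℂ)) * (2 * Real.pi * Complex.I) = ((m*n : ℤ):ℂ) * (2 * Real.pi * Complex.I) := by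
      push_cast; rw [hm]; ring
    have h3 := mul_right_cancel₀ two_pi_I_ne_zero h2
    rw [mul_comm]; exact_mod_cast h3
  · exact omega_zpow_of_dvd hn




lemma omega_zpow_congr {n : ℕ} (hn : n ≠ 0) {x y : ℤ} (h : (n:ℤ) ∣ (x - y)) :
    omega n ^ x = omega n ^ y := by
  have h1 : x = y + (x - y) := by ring
  rw [h1, zpow_add₀ (omega_ne_zero n), omega_zpow_of_dvd hn h, mul_one]

lemma conj_omega (n : ℕ) : (starRingEnd ℂ) (omega n) = (omega n)⁻¹ := by
  rw [omega, ← Complex.exp_conj, ← Complex.exp_neg]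
  congr 1
  simp [map_div₀, _root_.map_mul, Complex.conj_I, Complex.conj_ofReal, map_ofNat]
  ring

lemma conj_omega_pow (n : ℕ) (m : ℕ) :
    (starRingEnd ℂ) (omega n ^ m) = omega n ^ (-(m:ℤ)) := by
  rw [map_pow, conj_omega, _root_.zpow_neg, zpow_natCast, inv_pow]

lemma sum_omega_zpow {n : ℕ} (hn : n ≠ 0) (k : ℤ) :
    ∑ j : Fin n, omega n ^ (k * (j:ℕ)) = if (n:ℤ) ∣ k then (n:ℂ) else 0 := by
  have hz : ∀ j : Fin n, omega n ^ (k * (j:ℕ)) = (omega n ^ k) ^ (j:ℕ) := by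
    intro j; rw [← zpow_natCast (omega n ^ k), ← _root_.zpow_mul]
  simp_rw [hz]
  rw [Fin.sum_univ_eq_sum_range (fun i => (omega n ^ k) ^ i) n]
  by_cases h : (n:ℤ) ∣ k
  · simp [omega_zpow_of_dvd hn h, h]
  · rw [if_neg h]
    have h1 : omega n ^ k ≠ 1 := by rw [Ne, omega_zpow_eq_one_iff hn]; exact h
    rw [geom_sum_eq h1]
    have h2 : (omega n ^ k) ^ n = 1 := by
      rw [← zpow_natCast (omega n ^ k), ← _root_.zpow_mul, mul_comm]
      exact omega_zpow_of_dvd hn ⟨k, by ring⟩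
    rw [h2]; simp


variable {n : Type*} [Fintype n] [DecidableEq n]

abbrev Mat (n : Type*) [Fintype n] := Matrix n n ℂ

/-- multiplication by I as an ℝ-linear map -/
def Jmap (n : Type*) [Fintype n] : Mat n →ₗ[ℝ] Mat n where
  toFun X := Complex.I • X
  map_add' X Y := smul_add _ _ _
  map_smul' r X := smul_comm _ _ _

def Jequiv (n : Type*) [Fintype n] : Mat n ≃ₗ[ℝ] Mat n :=
  { Jmap n with
    invFun := fun X => (-Complex.I) • X
    left_inv := fun X => by
      show (-Complex.I) • (Complex.I • X) = X
      rw [smul_smul]; simp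
    right_inv := fun X => by
      show Complex.I • ((-Complex.I) • X) = X
      rw [smul_smul]; simp }

lemma real_smul_mat (r : ℝ) (X : Mat n) : r • X = (r:ℂ) • X := by
  ext i j; simp [Complex.real_smul]

/-- hermitian matrices as an ℝ-submodule -/
def hermSub (n : Type*) [Fintype n] : Submodule ℝ (Mat n) where
  carrier := {X | X.conjTranspose = X}
  add_mem' {X Y} hX hY := by simp_all [Matrix.conjTranspose_add]
  zero_mem' := by simp
  smul_mem' r X hX := by
    simp only [Set.mem_setOf_eq] at hX ⊢
    rw [Matrix.conjTranspose_smul, hX, star_trivial]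

lemma bridge (S : Set (Mat n)) (hS : ∀ X ∈ S, X.IsHermitian) :
    Module.finrank ℝ (Submodule.span ℝ S) = Module.finrank ℂ (Submodule.span ℂ S) := by
  set Vr := Submodule.span ℝ S with hVr
  set Vc := Submodule.span ℂ S with hVc
  set W : Submodule ℝ (Mat n) := Vr ⊔ Vr.map (Jmap n) with hW
  -- W is closed under multiplication by I
  have hWI : ∀ X ∈ W, Complex.I • X ∈ W := by
    intro X hX
    rw [hW, Submodule.mem_sup] at hX
    obtain ⟨y, hy, z, hz, rfl⟩ := hX
    obtain ⟨z', hz', rfl⟩ := hz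
    have : Complex.I • (y + Jmap n z') = Jmap n y + (-1 : ℝ) • z' := by
      show Complex.I • (y + Complex.I • z') = Complex.I • y + (-1:ℝ) • z'
      rw [smul_add, smul_smul, Complex.I_mul_I]
      congr 1
      ext i j
      simp
    rw [this]
    exact add_mem (Submodule.mem_sup_right (Submodule.mem_map_of_mem hy))
      (Submodule.mem_sup_left (Submodule.smul_mem _ _ hz'))
  -- restrictScalars of Vc equals W
  have hrW : Vc.restrictScalars ℝ = W := by
    apply le_antisymm
    · intro X hX
      rw [Submodule.restrictScalars_mem] at hX
      induction hX using Submodule.span_induction with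
      | mem x hx => exact Submodule.mem_sup_left (Submodule.subset_span hx)
      | zero => exact zero_mem _
      | add x y _ _ hx hy => exact add_mem hx hy
      | smul c x _ hx =>
        have hcx : c • x = c.re • x + c.im • (Complex.I • x) := by
          rw [real_smul_mat, real_smul_mat, smul_smul,
            show (c.re : ℂ) • x + ((c.im : ℂ) * Complex.I) • x
              = ((c.re : ℂ) + (c.im : ℂ) * Complex.I) • x by rw [add_smul],
            Complex.re_add_im]
        rw [hcx]
        exact add_mem (Submodule.smul_mem _ _ hx) (Submodule.smul_mem _ _ (hWI _ hx))
    · rw [hW, sup_le_iff]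
      constructor
      · exact (Submodule.span_le_restrictScalars ℝ ℂ S)
      · rw [Submodule.map_le_iff_le_comap]
        intro x hx
        simp only [Submodule.mem_comap, Submodule.restrictScalars_mem]
        have hx' : x ∈ Vc := Submodule.span_le_restrictScalars ℝ ℂ S hx
        exact Submodule.smul_mem _ _ hx'
  -- intersection is trivial
  have hVrHerm : Vr ≤ hermSub n := by
    rw [hVr, Submodule.span_le]; intro X hX; exact hS X hX
  have hinf : Vr ⊓ Vr.map (Jmap n) = ⊥ := by
    rw [eq_bot_iff]
    rintro X ⟨hX1, hX2⟩
    obtain ⟨Y, hY, rfl⟩ := hX2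
    have h1 : (Jmap n Y).conjTranspose = Jmap n Y := hVrHerm hX1
    have h2 : Y.conjTranspose = Y := hVrHerm hY
    have h3 : (Jmap n Y).conjTranspose = -(Jmap n Y) := by
      show (Complex.I • Y).conjTranspose = -(Complex.I • Y)
      rw [Matrix.conjTranspose_smul, h2]
      rw [show (star Complex.I) = -Complex.I by simp]
      rw [neg_smul]
    have h4 : Jmap n Y = 0 := by
      have heq := h1.symm.trans h3
      have h6 : Jmap n Y + Jmap n Y = 0 := by
        nth_rewrite 2 [heq]; exact add_neg_cancel _
      have h7 : (2:ℂ) • Jmap n Y = 0 := by rw [two_smul]; exact h6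
      simpa using (smul_eq_zero.mp h7).resolve_left two_ne_zero
    simp [Submodule.mem_bot, h4]
  have hmapeq : Module.finrank ℝ (Vr.map (Jmap n)) = Module.finrank ℝ Vr := by
    have : Vr.map (Jmap n) = Vr.map ((Jequiv n : Mat n ≃ₗ[ℝ] Mat n) : Mat n →ₗ[ℝ] Mat n) := rfl
    rw [this, LinearEquiv.finrank_map_eq]
  have hsum := Submodule.finrank_sup_add_finrank_inf_eq Vr (Vr.map (Jmap n))
  rw [hinf] at hsum
  simp only [finrank_bot, add_zero] at hsum
  -- finrank of restrictScalars
  have hres : Module.finrank ℝ (Vc.restrictScalars ℝ) = 2 * Module.finrank ℂ Vc := by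
    have e := (Submodule.restrictScalarsEquiv ℝ ℂ (Mat n) Vc).restrictScalars ℝ
    rw [LinearEquiv.finrank_eq e]
    have := Module.finrank_mul_finrank (F := ℝ) (K := ℂ) (A := Vc)
    rw [Complex.finrank_real_complex] at this
    omega
  have hfinal : Module.finrank ℝ W = 2 * Module.finrank ℂ Vc := by
    rw [← hrW] at *
    exact hres
  rw [hfinal, hmapeq] at hsum
  omega




/-- natural number in [0,n) congruent to z mod n -/
def imod (n : ℕ) (z : ℤ) : ℕ := (z % (n:ℤ)).toNat

lemma imod_lt {n : ℕ} (hn : 0 < n) (z : ℤ) : imod n z < n := by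
  have h1 : (0:ℤ) < n := by exact_mod_cast hn
  have := Int.emod_lt_of_pos z h1
  have h2 := Int.emod_nonneg z (by exact_mod_cast hn.ne' : (n:ℤ) ≠ 0)
  unfold imod
  omega

lemma imod_cast {n : ℕ} (hn : 0 < n) (z : ℤ) : ((imod n z : ℕ) : ℤ) = z % n := by
  unfold imod
  exact Int.toNat_of_nonneg (Int.emod_nonneg z (by exact_mod_cast hn.ne'))

lemma imod_dvd {n : ℕ} (hn : 0 < n) (z : ℤ) : (n:ℤ) ∣ z - imod n z := by
  rw [imod_cast hn]
  exact ⟨z / n, by linarith [Int.mul_ediv_add_emod z (n:ℤ)]⟩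

lemma imod_eq_iff {n : ℕ} (hn : 0 < n) (z : ℤ) {t : ℕ} (ht : t < n) :
    ((n:ℤ) ∣ z - t) ↔ t = imod n z := by
  constructor
  · intro h
    have h2 := imod_dvd hn z
    have h3 : (n:ℤ) ∣ ((t:ℤ) - imod n z) := by
      have := dvd_sub h2 h
      simpa using this
    have h4 : ((t:ℤ) - imod n z) = 0 := by
      apply Int.eq_zero_of_abs_lt_dvd h3
      have := imod_lt hn z
      have h5 : (imod n z : ℤ) < n := by exact_mod_cast this
      have h6 : (0:ℤ) ≤ (imod n z : ℤ) := by positivity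
      have h7 : (t:ℤ) < n := by exact_mod_cast ht
      have h8 : (0:ℤ) ≤ t := by positivity
      rw [abs_lt]; omega
    have : (t:ℤ) = imod n z := by omega
    exact_mod_cast this
  · rintro rfl
    exact imod_dvd hn z

lemma imod_eq_zero_iff {n : ℕ} (hn : 0 < n) (z : ℤ) :
    imod n z = 0 ↔ (n:ℤ) ∣ z := by
  constructor
  · intro h
    have := imod_dvd hn z
    rw [h] at this; simpa using this
  · intro h
    have := (imod_eq_iff hn z hn).mp (by simpa using h)
    omega



def matD (d : ℕ) (i : Fin d) : Matrix (Fin d) (Fin d) ℂ :=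
  Matrix.of fun a b => if a = i ∧ b = i then (1:ℂ) else 0

def matF (d : ℕ) (t : Fin d) : Matrix (Fin d) (Fin d) ℂ :=
  Matrix.of fun a b => if (d:ℤ) ∣ ((a.val:ℤ) - (b.val:ℤ) - (t.val:ℤ)) then (1:ℂ) else 0

def matG (d p q : ℕ) (m : Fin p) (w : Fin q) : Matrix (Fin d) (Fin d) ℂ :=
  Matrix.of fun a b => if a.val % p = m.val ∧ b.val % p = m.val ∧
      (q:ℤ) ∣ (((a.val / p : ℕ):ℤ) - ((b.val / p : ℕ):ℤ) - (w.val:ℤ)) then (1:ℂ) else 0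

lemma proj_std (d : ℕ) (i : Fin d) : proj d (stdVec d i) = matD d i := by
  ext a b
  simp only [proj, stdVec, matD, Matrix.of_apply]
  split_ifs with h1 h2 h3 h4 h5 <;> simp_all

lemma inv_sqrt_sq (n : ℕ) :
    ((1 / Real.sqrt n : ℝ) : ℂ) * ((1 / Real.sqrt n : ℝ) : ℂ) = 1 / (n:ℂ) := by
  rw [← Complex.ofReal_mul]
  rw [div_mul_div_comm, one_mul, Real.mul_self_sqrt (by positivity)]
  push_cast
  ring

lemma proj_fourier_entry (d : ℕ) (j a b : Fin d) :
    proj d (fourierVec d j) a b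
      = (1 / (d:ℂ)) * omega d ^ ((((a.val):ℤ) - (b.val:ℤ)) * (j.val:ℤ)) := by
  simp only [proj, fourierVec, Matrix.of_apply, _root_.map_mul, Complex.conj_ofReal,
    conj_omega_pow]
  rw [show ((1 / Real.sqrt d : ℝ) : ℂ) * omega d ^ (a.val * j.val) *
      (((1 / Real.sqrt d : ℝ) : ℂ) * omega d ^ (-((b.val * j.val : ℕ):ℤ)))
      = (((1 / Real.sqrt d : ℝ) : ℂ) * ((1 / Real.sqrt d : ℝ) : ℂ)) *
        (omega d ^ ((a.val * j.val : ℕ):ℤ) * omega d ^ (-((b.val * j.val : ℕ):ℤ))) by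
    rw [zpow_natCast]; ring]
  rw [inv_sqrt_sq, ← _root_.zpow_add₀ (omega_ne_zero d)]
  congr 1
  push_cast
  ring

lemma proj_psi_entry (d p q : ℕ) (m : Fin p) (s : Fin q) (a b : Fin d) :
    proj d (psiPQ d p q m s) a b
      = if a.val % p = m.val ∧ b.val % p = m.val then
          (1 / (q:ℂ)) * omega q ^ ((((a.val / p : ℕ):ℤ) - ((b.val / p : ℕ):ℤ)) * (s.val:ℤ))
        else 0 := by
  by_cases h1 : a.val % p = m.val
  rotate_left
  · simp [proj, psiPQ, Matrix.of_apply, h1]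
  by_cases h2 : b.val % p = m.val
  rotate_left
  · simp [proj, psiPQ, Matrix.of_apply, h1, h2]
  simp only [proj, psiPQ, Matrix.of_apply, h1, h2, eq_self_iff_true, if_true, and_self,
    _root_.map_mul, Complex.conj_ofReal, conj_omega_pow]
  rw [show ((1 / Real.sqrt q : ℝ) : ℂ) * omega q ^ (s.val * (a.val / p)) *
      (((1 / Real.sqrt q : ℝ) : ℂ) * omega q ^ (-((s.val * (b.val / p) : ℕ):ℤ)))
      = (((1 / Real.sqrt q : ℝ) : ℂ) * ((1 / Real.sqrt q : ℝ) : ℂ)) *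
        (omega q ^ ((s.val * (a.val / p) : ℕ):ℤ) * omega q ^ (-((s.val * (b.val / p) : ℕ):ℤ))) by
    rw [zpow_natCast]; ring]
  rw [inv_sqrt_sq, ← _root_.zpow_add₀ (omega_ne_zero q)]
  congr 1
  push_cast
  ring


lemma sum_matD_entry (d : ℕ) (a b : Fin d) :
    (∑ i, matD d i a b) = if a = b then (1:ℂ) else 0 := by
  rw [Finset.sum_eq_single a]
  · simp only [matD, Matrix.of_apply, true_and]
    by_cases h : a = b
    · simp [h]
    · rw [if_neg (fun hh => h hh.symm), if_neg h]
  · intro i _ hi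
    simp only [matD, Matrix.of_apply]
    rw [if_neg]
    rintro ⟨rfl, -⟩
    exact hi rfl
  · intro h
    exact absurd (Finset.mem_univ a) h

lemma sum_matD_class_entry (d p : ℕ) (mv : ℕ) (a b : Fin d) :
    (∑ i, (if i.val % p = mv then matD d i else 0) a b)
      = if a = b ∧ a.val % p = mv then (1:ℂ) else 0 := by
  rw [Finset.sum_eq_single a]
  · by_cases hm : a.val % p = mv
    · simp only [hm, if_true, matD, Matrix.of_apply, true_and, and_true]
      by_cases h : a = b
      · simp [h]
      · rw [if_neg (fun hh => h hh.symm), if_neg h]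
    · simp [hm]
  · intro i _ hi
    by_cases hm : i.val % p = mv
    · simp only [hm, if_true, matD, Matrix.of_apply]
      rw [if_neg]
      rintro ⟨rfl, -⟩
      exact hi rfl
    · simp [hm]
  · intro h
    exact absurd (Finset.mem_univ a) h

lemma abs_sub_lt_of_fin {d : ℕ} (a b : Fin d) : |(a.val:ℤ) - (b.val:ℤ)| < d := by
  have := a.isLt; have := b.isLt
  rw [abs_lt]; omega

lemma fin_eq_of_dvd {d : ℕ} (a b : Fin d) (h : (d:ℤ) ∣ (a.val:ℤ) - (b.val:ℤ)) : a = b := by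
  have h2 := Int.eq_zero_of_abs_lt_dvd h (abs_sub_lt_of_fin a b)
  have : a.val = b.val := by omega
  exact Fin.ext this

lemma fourier_decomp {d : ℕ} (hd : 0 < d) (j : Fin d) :
    proj d (fourierVec d j) = (1/(d:ℂ)) • (∑ i, matD d i)
      + ∑ t : Fin d, ((1/(d:ℂ)) * omega d ^ ((t.val:ℤ) * (j.val:ℤ))) •
          (if t.val = 0 then 0 else matF d t) := by
  ext a b
  simp only [Matrix.add_apply, Matrix.smul_apply, Matrix.sum_apply, smul_eq_mul]
  rw [sum_matD_entry, proj_fourier_entry]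
  by_cases hab : a = b
  · subst hab
    rw [if_pos rfl, Finset.sum_eq_zero, add_zero]
    · simp
    · intro t _
      by_cases ht : t.val = 0
      · simp [ht]
      · rw [if_neg ht]
        simp only [matF, Matrix.of_apply]
        rw [if_neg, mul_zero]
        intro hdvd
        have h2 : ((a.val:ℤ) - a.val - t.val) = 0 := by
          apply Int.eq_zero_of_abs_lt_dvd hdvd
          have := t.isLt
          rw [abs_lt]; omega
        have := t.isLt
        omega
  · rw [if_neg hab, mul_zero, zero_add]
    set t0 : Fin d := ⟨imod d ((a.val:ℤ) - b.val), imod_lt hd _⟩ with ht0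
    rw [Finset.sum_eq_single t0]
    · have ht0ne : t0.val ≠ 0 := by
        intro h
        have : (d:ℤ) ∣ (a.val:ℤ) - b.val := (imod_eq_zero_iff hd _).mp h
        exact hab (fin_eq_of_dvd a b this)
      rw [if_neg ht0ne]
      simp only [matF, Matrix.of_apply]
      rw [if_pos (imod_dvd hd _), mul_one]
      congr 1
      apply omega_zpow_congr hd.ne'
      have h1 : (d:ℤ) ∣ ((a.val:ℤ) - b.val - t0.val) := imod_dvd hd _
      have h2 : ((a.val:ℤ) - b.val) * j.val - (t0.val:ℤ) * j.val
          = ((a.val:ℤ) - b.val - t0.val) * j.val := by ring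
      rw [h2]
      exact Dvd.dvd.mul_right h1 _
    · intro t _ hne
      by_cases ht : t.val = 0
      · simp [ht]
      · rw [if_neg ht]
        simp only [matF, Matrix.of_apply]
        rw [if_neg, mul_zero]
        intro hdvd
        have := (imod_eq_iff hd ((a.val:ℤ) - b.val) t.isLt).mp hdvd
        exact hne (Fin.ext this)
    · intro h; exact absurd (Finset.mem_univ t0) h

lemma div_lt_q {d p q : ℕ} (hp : 0 < p) (hd : d = p * q) (a : Fin d) : a.val / p < q := by
  rw [Nat.div_lt_iff_lt_mul hp]
  calc a.val < p * q := by rw [← hd]; exact a.isLt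
    _ = q * p := Nat.mul_comm p q

lemma psi_decomp {d p q : ℕ} (hp : 0 < p) (hq : 0 < q) (hd : d = p * q)
    (m : Fin p) (s : Fin q) :
    proj d (psiPQ d p q m s)
      = (1/(q:ℂ)) • (∑ i, if i.val % p = m.val then matD d i else 0)
        + ∑ w : Fin q, ((1/(q:ℂ)) * omega q ^ ((w.val:ℤ) * (s.val:ℤ))) •
            (if w.val = 0 then 0 else matG d p q m w) := by
  ext a b
  simp only [Matrix.add_apply, Matrix.smul_apply, Matrix.sum_apply, smul_eq_mul]
  rw [sum_matD_class_entry, proj_psi_entry]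
  by_cases hcl : a.val % p = m.val ∧ b.val % p = m.val
  · rw [if_pos hcl]
    by_cases hab : a = b
    · subst hab
      rw [if_pos ⟨rfl, hcl.1⟩, Finset.sum_eq_zero, add_zero]
      · simp
      · intro w _
        by_cases hw : w.val = 0
        · simp [hw]
        · rw [if_neg hw]
          simp only [matG, Matrix.of_apply]
          rw [if_neg, mul_zero]
          rintro ⟨-, -, hdvd⟩
          have h2 : ((a.val/p:ℕ):ℤ) - ((a.val/p:ℕ):ℤ) - (w.val:ℤ) = 0 := by
            apply Int.eq_zero_of_abs_lt_dvd hdvd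
            have := w.isLt
            rw [abs_lt]; omega
          have := w.isLt
          omega
    · rw [if_neg (by tauto), mul_zero, zero_add]
      have hu : a.val / p < q := div_lt_q hp hd a
      have hv : b.val / p < q := div_lt_q hp hd b
      set z : ℤ := ((a.val/p:ℕ):ℤ) - ((b.val/p:ℕ):ℤ) with hz
      set w0 : Fin q := ⟨imod q z, imod_lt hq _⟩ with hw0
      rw [Finset.sum_eq_single w0]
      · have hw0ne : w0.val ≠ 0 := by
          intro h
          have hdvd : (q:ℤ) ∣ z := (imod_eq_zero_iff hq _).mp h
          have hu' : (((a.val/p : ℕ)):ℤ) < q := by exact_mod_cast hu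
          have hv' : (((b.val/p : ℕ)):ℤ) < q := by exact_mod_cast hv
          have hu0 : (0:ℤ) ≤ ((a.val/p : ℕ):ℤ) := by positivity
          have hv0 : (0:ℤ) ≤ ((b.val/p : ℕ):ℤ) := by positivity
          have h2 : z = 0 := by
            apply Int.eq_zero_of_abs_lt_dvd hdvd
            rw [hz, abs_lt]
            constructor <;> linarith
          rw [hz] at h2
          have huv : a.val / p = b.val / p := by exact_mod_cast sub_eq_zero.mp h2
          obtain ⟨hc1, hc2⟩ := hcl
          apply hab
          apply Fin.ext
          calc a.val = p * (a.val / p) + a.val % p := (Nat.div_add_mod _ _).symm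
            _ = p * (b.val / p) + b.val % p := by rw [huv, hc1, hc2]
            _ = b.val := Nat.div_add_mod _ _
        rw [if_neg hw0ne]
        simp only [matG, Matrix.of_apply]
        rw [if_pos ⟨hcl.1, hcl.2, imod_dvd hq _⟩, mul_one]
        congr 1
        apply omega_zpow_congr hq.ne'
        have h1 : (q:ℤ) ∣ (z - w0.val) := imod_dvd hq _
        have h2 : z * s.val - (w0.val:ℤ) * s.val = (z - w0.val) * s.val := by ring
        rw [h2]
        exact Dvd.dvd.mul_right h1 _
      · intro w _ hne
        by_cases hw : w.val = 0
        · simp [hw]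
        · rw [if_neg hw]
          simp only [matG, Matrix.of_apply]
          rw [if_neg, mul_zero]
          rintro ⟨-, -, hdvd⟩
          have := (imod_eq_iff hq z w.isLt).mp hdvd
          exact hne (Fin.ext this)
      · intro h; exact absurd (Finset.mem_univ w0) h
  · rw [if_neg hcl]
    have hd1 : ¬(a = b ∧ a.val % p = m.val) := by
      rintro ⟨rfl, h⟩
      exact hcl ⟨h, h⟩
    rw [if_neg hd1, mul_zero, zero_add]
    symm
    apply Finset.sum_eq_zero
    intro w _
    by_cases hw : w.val = 0
    · simp [hw]
    · rw [if_neg hw]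
      simp only [matG, Matrix.of_apply]
      rw [if_neg, mul_zero]
      rintro ⟨h1, h2, -⟩
      exact hcl ⟨h1, h2⟩

lemma matF_inv {d : ℕ} (hd : 0 < d) (t : Fin d) :
    matF d t = ∑ j : Fin d, omega d ^ (-((t.val:ℤ) * (j.val:ℤ))) • proj d (fourierVec d j) := by
  ext a b
  simp only [Matrix.sum_apply, Matrix.smul_apply, smul_eq_mul]
  have step : ∀ j : Fin d, omega d ^ (-((t.val:ℤ) * (j.val:ℤ))) * proj d (fourierVec d j) a b
      = (1/(d:ℂ)) * omega d ^ ((((a.val:ℤ) - b.val - t.val)) * (j.val:ℤ)) := by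
    intro j
    rw [proj_fourier_entry]
    rw [show omega d ^ (-((t.val:ℤ) * (j.val:ℤ))) * ((1/(d:ℂ)) * omega d ^ ((((a.val):ℤ) - (b.val:ℤ)) * (j.val:ℤ)))
        = (1/(d:ℂ)) * (omega d ^ (-((t.val:ℤ) * (j.val:ℤ))) * omega d ^ ((((a.val):ℤ) - (b.val:ℤ)) * (j.val:ℤ))) by ring]
    rw [← _root_.zpow_add₀ (omega_ne_zero d)]
    congr 2
    ring
  rw [Finset.sum_congr rfl (fun j _ => step j), ← Finset.mul_sum]
  rw [sum_omega_zpow hd.ne']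
  simp only [matF, Matrix.of_apply]
  split_ifs with h
  · have : (d:ℂ) ≠ 0 := by exact_mod_cast hd.ne'
    field_simp
  · rw [mul_zero]

lemma matG_inv {d p q : ℕ} (hp : 0 < p) (hq : 0 < q) (hd : d = p * q)
    (m : Fin p) (w : Fin q) :
    matG d p q m w
      = ∑ s : Fin q, omega q ^ (-((w.val:ℤ) * (s.val:ℤ))) • proj d (psiPQ d p q m s) := by
  ext a b
  simp only [Matrix.sum_apply, Matrix.smul_apply, smul_eq_mul, matG, Matrix.of_apply]
  by_cases hcl : a.val % p = m.val ∧ b.val % p = m.val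
  · have step : ∀ s : Fin q, omega q ^ (-((w.val:ℤ) * (s.val:ℤ))) * proj d (psiPQ d p q m s) a b
        = (1/(q:ℂ)) * omega q ^ (((((a.val/p:ℕ)):ℤ) - ((b.val/p:ℕ):ℤ) - (w.val:ℤ)) * (s.val:ℤ)) := by
      intro s
      rw [proj_psi_entry, if_pos hcl]
      rw [show omega q ^ (-((w.val:ℤ) * (s.val:ℤ))) * ((1/(q:ℂ)) * omega q ^ (((((a.val/p:ℕ)):ℤ) - ((b.val/p:ℕ):ℤ)) * (s.val:ℤ)))
          = (1/(q:ℂ)) * (omega q ^ (-((w.val:ℤ) * (s.val:ℤ))) * omega q ^ (((((a.val/p:ℕ)):ℤ) - ((b.val/p:ℕ):ℤ)) * (s.val:ℤ))) by ring]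
      rw [← _root_.zpow_add₀ (omega_ne_zero q)]
      congr 2
      ring
    rw [Finset.sum_congr rfl (fun s _ => step s), ← Finset.mul_sum]
    rw [sum_omega_zpow hq.ne']
    by_cases hdvd : (q:ℤ) ∣ ((((a.val/p:ℕ)):ℤ) - ((b.val/p:ℕ):ℤ) - (w.val:ℤ))
    · rw [if_pos ⟨hcl.1, hcl.2, hdvd⟩, if_pos hdvd]
      have : (q:ℂ) ≠ 0 := by exact_mod_cast hq.ne'
      field_simp
    · rw [if_neg (by tauto), if_neg hdvd, mul_zero]
  · rw [if_neg (by tauto)]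
    symm
    apply Finset.sum_eq_zero
    intro s _
    rw [proj_psi_entry, if_neg hcl, mul_zero]

lemma dvd_pq_iff {p q : ℕ} (hp : 0 < p) (x : ℤ) :
    ((p:ℤ) * q) ∣ (p:ℤ) * x ↔ (q:ℤ) ∣ x := by
  have hp' : (p:ℤ) ≠ 0 := by exact_mod_cast hp.ne'
  constructor
  · rintro ⟨k, hk⟩
    refine ⟨k, ?_⟩
    have : (p:ℤ) * x = (p:ℤ) * ((q:ℤ) * k) := by rw [hk]; ring
    exact mul_left_cancel₀ hp' this
  · rintro ⟨k, rfl⟩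
    exact ⟨k, by ring⟩

lemma matF_eq_sum_matG {d p q : ℕ} (hp : 0 < p) (hq : 0 < q) (hd : d = p * q)
    (w : Fin q) (hlt : w.val * p < d) :
    matF d ⟨w.val * p, hlt⟩ = ∑ m : Fin p, matG d p q m w := by
  ext a b
  simp only [Matrix.sum_apply, matF, matG, Matrix.of_apply]
  by_cases hcl : a.val % p = b.val % p
  · rw [Finset.sum_eq_single (⟨a.val % p, Nat.mod_lt _ hp⟩ : Fin p)]
    · have key : ((d:ℤ) ∣ ((a.val:ℤ) - b.val - ((w.val * p : ℕ):ℤ)))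
          ↔ ((q:ℤ) ∣ (((a.val/p:ℕ)):ℤ) - ((b.val/p:ℕ):ℤ) - (w.val:ℤ)) := by
        have ha := Nat.div_add_mod a.val p
        have hb := Nat.div_add_mod b.val p
        have ha' : (a.val:ℤ) = (p:ℤ) * ((a.val/p:ℕ):ℤ) + ((a.val % p:ℕ):ℤ) := by
          exact_mod_cast ha.symm
        have hb' : (b.val:ℤ) = (p:ℤ) * ((b.val/p:ℕ):ℤ) + ((b.val % p:ℕ):ℤ) := by
          exact_mod_cast hb.symm
        have hcl' : ((a.val % p : ℕ):ℤ) = ((b.val % p : ℕ):ℤ) := by exact_mod_cast hcl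
        have hsub : (a.val:ℤ) - b.val - ((w.val * p : ℕ):ℤ)
            = (p:ℤ) * ((((a.val/p:ℕ)):ℤ) - ((b.val/p:ℕ):ℤ) - (w.val:ℤ)) := by
          rw [Nat.cast_mul, ha', hb', hcl']
          ring
        have hdc : (d:ℤ) = (p:ℤ) * (q:ℤ) := by exact_mod_cast hd
        rw [hsub, hdc]
        exact dvd_pq_iff hp _
      by_cases hdvd : (q:ℤ) ∣ (((a.val/p:ℕ)):ℤ) - ((b.val/p:ℕ):ℤ) - (w.val:ℤ)
      · rw [if_pos (key.mpr hdvd), if_pos ⟨rfl, hcl.symm, hdvd⟩]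
      · rw [if_neg (fun h => hdvd (key.mp h)), if_neg (by tauto)]
    · intro m _ hm
      rw [if_neg]
      rintro ⟨h1, -, -⟩
      apply hm
      apply Fin.ext
      simp [← h1]
    · intro h; exact absurd (Finset.mem_univ _) h
  · rw [if_neg, Finset.sum_eq_zero]
    · intro m _
      rw [if_neg]
      rintro ⟨h1, h2, -⟩
      exact hcl (h1.trans h2.symm)
    · intro hdvd
      apply hcl
      have hpd : (p:ℤ) ∣ ((a.val:ℤ) - b.val) := by
        have h1 : (p:ℤ) ∣ (d:ℤ) := ⟨q, by exact_mod_cast hd⟩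
        have h2 : (p:ℤ) ∣ ((a.val:ℤ) - b.val - ((w.val * p : ℕ):ℤ)) := dvd_trans h1 hdvd
        have h3 : (p:ℤ) ∣ ((w.val * p : ℕ):ℤ) := ⟨(w.val:ℤ), by push_cast; ring⟩
        have := dvd_add h2 h3
        simpa using this
      have hmod : a.val ≡ b.val [MOD p] :=
        (Nat.modEq_iff_dvd).mpr (dvd_sub_comm.mp hpd)
      exact hmod


lemma phi_eq_psi (d p q : ℕ) (m : Fin q) (s : Fin p) :
    phiPQ d p q m s = psiPQ d q p m s := rfl

lemma proj_herm (d : ℕ) (v : Fin d → ℂ) : (proj d v).IsHermitian := by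
  unfold Matrix.IsHermitian
  ext a b
  simp [proj, Matrix.conjTranspose_apply, mul_comm]

abbrev Idx (d p q : ℕ) : Type :=
  (Fin d) ⊕ (({t : Fin d // t.val ≠ 0}) ⊕
    (({m : Fin p // m.val ≠ 0} × {w : Fin q // w.val ≠ 0}) ⊕
     ({m : Fin q // m.val ≠ 0} × {w : Fin p // w.val ≠ 0})))

def bas (d p q : ℕ) : Idx d p q → Matrix (Fin d) (Fin d) ℂ
  | Sum.inl i => matD d i
  | Sum.inr (Sum.inl t) => matF d t.1
  | Sum.inr (Sum.inr (Sum.inl mw)) => matG d p q mw.1.1 mw.2.1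
  | Sum.inr (Sum.inr (Sum.inr mw)) => matG d q p mw.1.1 mw.2.1

lemma rep_lt {p q d : ℕ} (hd : d = p * q) {wv mv : ℕ} (hw : wv < q) (hm : mv < p) :
    wv * p + mv < d := by
  calc wv * p + mv < wv * p + p := by omega
    _ = (wv + 1) * p := by ring
    _ ≤ q * p := Nat.mul_le_mul_right p (Nat.succ_le_of_lt hw)
    _ = d := by rw [hd, Nat.mul_comm]

lemma matG_mem {d p q : ℕ} (hp : 0 < p) (hq : 0 < q) (hd : d = p * q)
    (V : Submodule ℂ (Matrix (Fin d) (Fin d) ℂ))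
    (m : Fin p) (w : Fin q) (hw : w.val ≠ 0)
    (emb : ∀ (m' : Fin p) (w' : Fin q), m'.val ≠ 0 → w'.val ≠ 0 →
      matG d p q m' w' ∈ V)
    (embF : ∀ (t : Fin d), t.val ≠ 0 → matF d t ∈ V) :
    matG d p q m w ∈ V := by
  by_cases hm : m.val = 0
  · have hlt : w.val * p < d := by
      have := rep_lt hd w.isLt hp
      omega
    have h7 := matF_eq_sum_matG hp hq hd w hlt
    have h8 : matG d p q m w
        = matF d ⟨w.val * p, hlt⟩ - ∑ m' ∈ Finset.univ.erase m, matG d p q m' w := by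
      rw [h7, ← Finset.add_sum_erase _ _ (Finset.mem_univ m)]
      abel
    rw [h8]
    apply Submodule.sub_mem
    · apply embF
      simp only
      intro h
      rcases Nat.mul_eq_zero.mp h with h' | h'
      · exact hw h'
      · exact hp.ne' h'
    · apply Submodule.sum_mem
      intro m' hm'
      have hm'0 : m'.val ≠ 0 := by
        intro h0
        have : m' = m := Fin.ext (by omega)
        exact (Finset.ne_of_mem_erase hm') this
      exact emb m' w hm'0 hw
  · exact emb m w hm hw

lemma span_sub (d p q : ℕ) (hp : 0 < p) (hq : 0 < q) (hd : d = p * q) :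
    Submodule.span ℂ (setA d ∪ setB d ∪ setC d p q ∪ setD d p q)
      = Submodule.span ℂ (Set.range (bas d p q)) := by
  have hd0 : 0 < d := by rw [hd]; positivity
  have hdq : d = q * p := by rw [hd, Nat.mul_comm]
  -- basic membership facts
  have hDmem : ∀ i : Fin d, matD d i ∈ Submodule.span ℂ (Set.range (bas d p q)) :=
    fun i => Submodule.subset_span ⟨Sum.inl i, rfl⟩
  have hFmem : ∀ (t : Fin d), t.val ≠ 0 →
      matF d t ∈ Submodule.span ℂ (Set.range (bas d p q)) :=
    fun t ht => Submodule.subset_span ⟨Sum.inr (Sum.inl ⟨t, ht⟩), rfl⟩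
  have hGmem : ∀ (m : Fin p) (w : Fin q), m.val ≠ 0 → w.val ≠ 0 →
      matG d p q m w ∈ Submodule.span ℂ (Set.range (bas d p q)) :=
    fun m w hm hw => Submodule.subset_span ⟨Sum.inr (Sum.inr (Sum.inl (⟨m, hm⟩, ⟨w, hw⟩))), rfl⟩
  have hGmem' : ∀ (m : Fin q) (w : Fin p), m.val ≠ 0 → w.val ≠ 0 →
      matG d q p m w ∈ Submodule.span ℂ (Set.range (bas d p q)) :=
    fun m w hm hw => Submodule.subset_span ⟨Sum.inr (Sum.inr (Sum.inr (⟨m, hm⟩, ⟨w, hw⟩))), rfl⟩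
  have hGall : ∀ (m : Fin p) (w : Fin q), w.val ≠ 0 →
      matG d p q m w ∈ Submodule.span ℂ (Set.range (bas d p q)) :=
    fun m w hw => matG_mem hp hq hd _ m w hw hGmem hFmem
  have hGall' : ∀ (m : Fin q) (w : Fin p), w.val ≠ 0 →
      matG d q p m w ∈ Submodule.span ℂ (Set.range (bas d p q)) :=
    fun m w hw => matG_mem hq hp hdq _ m w hw hGmem' hFmem
  apply le_antisymm
  · rw [Submodule.span_le]
    intro X hX
    rcases hX with ((hX | hX) | hX) | hX
    · obtain ⟨i, rfl⟩ := hX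
      rw [proj_std]
      exact hDmem i
    · obtain ⟨j, rfl⟩ := hX
      rw [fourier_decomp hd0 j]
      apply Submodule.add_mem
      · exact Submodule.smul_mem _ _ (Submodule.sum_mem _ (fun i _ => hDmem i))
      · apply Submodule.sum_mem
        intro t _
        apply Submodule.smul_mem
        by_cases ht : t.val = 0
        · rw [if_pos ht]; exact Submodule.zero_mem _
        · rw [if_neg ht]; exact hFmem t ht
    · obtain ⟨m, s, rfl⟩ := hX
      rw [psi_decomp hp hq hd m s]
      apply Submodule.add_mem
      · apply Submodule.smul_mem
        apply Submodule.sum_mem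
        intro i _
        by_cases hi : i.val % p = m.val
        · rw [if_pos hi]; exact hDmem i
        · rw [if_neg hi]; exact Submodule.zero_mem _
      · apply Submodule.sum_mem
        intro w _
        apply Submodule.smul_mem
        by_cases hw : w.val = 0
        · rw [if_pos hw]; exact Submodule.zero_mem _
        · rw [if_neg hw]; exact hGall m w hw
    · obtain ⟨m, s, rfl⟩ := hX
      rw [phi_eq_psi, psi_decomp hq hp hdq m s]
      apply Submodule.add_mem
      · apply Submodule.smul_mem
        apply Submodule.sum_mem
        intro i _
        by_cases hi : i.val % q = m.val
        · rw [if_pos hi]; exact hDmem i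
        · rw [if_neg hi]; exact Submodule.zero_mem _
      · apply Submodule.sum_mem
        intro w _
        apply Submodule.smul_mem
        by_cases hw : w.val = 0
        · rw [if_pos hw]; exact Submodule.zero_mem _
        · rw [if_neg hw]; exact hGall' m w hw
  · rw [Submodule.span_le]
    rintro X ⟨ι, rfl⟩
    match ι with
    | Sum.inl i =>
      apply Submodule.subset_span
      left; left; left
      exact ⟨i, (proj_std d i).symm⟩
    | Sum.inr (Sum.inl t) =>
      show matF d t.1 ∈ _
      rw [matF_inv hd0 t.1]
      apply Submodule.sum_mem
      intro j _
      apply Submodule.smul_mem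
      apply Submodule.subset_span
      left; left; right
      exact ⟨j, rfl⟩
    | Sum.inr (Sum.inr (Sum.inl mw)) =>
      show matG d p q mw.1.1 mw.2.1 ∈ _
      rw [matG_inv hp hq hd]
      apply Submodule.sum_mem
      intro s _
      apply Submodule.smul_mem
      apply Submodule.subset_span
      left; right
      exact ⟨mw.1.1, s, rfl⟩
    | Sum.inr (Sum.inr (Sum.inr mw)) =>
      show matG d q p mw.1.1 mw.2.1 ∈ _
      rw [matG_inv hq hp hdq]
      apply Submodule.sum_mem
      intro s _
      apply Submodule.smul_mem
      apply Submodule.subset_span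
      right
      exact ⟨mw.1.1, s, phi_eq_psi d p q mw.1.1 s ▸ rfl⟩

def entryLM (d : ℕ) (a b : Fin d) : Matrix (Fin d) (Fin d) ℂ →ₗ[ℂ] ℂ where
  toFun X := X a b
  map_add' X Y := rfl
  map_smul' c X := rfl

@[simp] lemma entryLM_apply (d : ℕ) (a b : Fin d) (X : Matrix (Fin d) (Fin d) ℂ) :
    entryLM d a b X = X a b := rfl

lemma wp_mod {p : ℕ} (w m : ℕ) (hm : m < p) : (w * p + m) % p = m := by
  rw [Nat.add_comm, Nat.add_mul_mod_self_right, Nat.mod_eq_of_lt hm]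

lemma wp_div {p : ℕ} (hp : 0 < p) (w m : ℕ) (hm : m < p) : (w * p + m) / p = w := by
  rw [Nat.add_comm, Nat.add_mul_div_right _ _ hp, Nat.div_eq_of_lt hm, Nat.zero_add]

lemma matG_zero_of_b {d p q : ℕ} (m : Fin p) (w : Fin q) (a b : Fin d)
    (h : b.val % p ≠ m.val) : matG d p q m w a b = 0 := by
  simp only [matG, Matrix.of_apply]
  rw [if_neg]
  rintro ⟨-, h2, -⟩
  exact h h2

lemma matG_zero_of_a {d p q : ℕ} (m : Fin p) (w : Fin q) (a b : Fin d)
    (h : a.val % p ≠ m.val) : matG d p q m w a b = 0 := by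
  simp only [matG, Matrix.of_apply]
  rw [if_neg]
  rintro ⟨h2, -, -⟩
  exact h h2

lemma matG_diag_zero {d p q : ℕ} (hq : 0 < q) (m : Fin p) (w : Fin q) (hw : w.val ≠ 0)
    (a b : Fin d) (hdiv : a.val / p = b.val / p) : matG d p q m w a b = 0 := by
  simp only [matG, Matrix.of_apply]
  rw [if_neg]
  rintro ⟨-, -, hdvd⟩
  rw [hdiv] at hdvd
  have h2 : ((b.val/p:ℕ):ℤ) - ((b.val/p:ℕ):ℤ) - (w.val:ℤ) = 0 := by
    apply Int.eq_zero_of_abs_lt_dvd hdvd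
    have := w.isLt
    rw [abs_lt]
    omega
  have := w.isLt
  omega

lemma mod_ne_cross {p q : ℕ} (hcop : Nat.Coprime q p) {wv mv : ℕ}
    (hw : wv < q) (hw0 : wv ≠ 0) : (wv * p + mv) % q ≠ mv % q := by
  intro h
  have h1 : (mv + wv * p) % q = mv % q := by rw [Nat.add_comm]; exact h
  have h2 : q ∣ (mv + wv * p) - mv :=
    (Nat.modEq_iff_dvd' (Nat.le_add_right mv (wv * p))).mp h1.symm
  rw [Nat.add_sub_cancel_left] at h2
  have h3 : q ∣ wv := hcop.dvd_of_dvd_mul_right h2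
  have := Nat.le_of_dvd (Nat.pos_of_ne_zero hw0) h3
  omega

lemma G_eval_diag {d p q : ℕ} (hp : 0 < p) (hq : 0 < q) (hd : d = p * q)
    (m m' : Fin p) (w w' : Fin q) (a b : Fin d)
    (ha : a.val = w'.val * p + m'.val) (hb : b.val = m'.val) :
    matG d p q m w a b = if m'.val = m.val ∧ w'.val = w.val then 1 else 0 := by
  simp only [matG, Matrix.of_apply]
  have h1 : a.val % p = m'.val := by rw [ha]; exact wp_mod _ _ m'.isLt
  have h2 : a.val / p = w'.val := by rw [ha]; exact wp_div hp _ _ m'.isLt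
  have h3 : b.val % p = m'.val := by rw [hb]; exact Nat.mod_eq_of_lt m'.isLt
  have h4 : b.val / p = 0 := by rw [hb]; exact Nat.div_eq_of_lt m'.isLt
  rw [h1, h2, h3, h4]
  by_cases hm : m'.val = m.val
  · by_cases hw : w'.val = w.val
    · rw [if_pos ⟨hm, hm, by rw [hw]; simp⟩, if_pos ⟨hm, hw⟩]
    · rw [if_neg, if_neg (by tauto)]
      rintro ⟨-, -, hdvd⟩
      simp only [Nat.cast_zero, sub_zero] at hdvd
      have h5 : ((w'.val:ℕ):ℤ) - (w.val:ℤ) = 0 := by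
        apply Int.eq_zero_of_abs_lt_dvd hdvd
        have := w.isLt; have := w'.isLt
        rw [abs_lt]; omega
      apply hw
      omega
  · rw [if_neg (by tauto), if_neg (by tauto)]

lemma matG_zero_of_ne_mod {d p q : ℕ} (m : Fin p) (w : Fin q) (a b : Fin d)
    (h : a.val % p ≠ b.val % p) : matG d p q m w a b = 0 := by
  simp only [matG, Matrix.of_apply]
  rw [if_neg]
  rintro ⟨h1, h2, -⟩
  exact h (h1.trans h2.symm)

lemma G_eval_cross {d p q : ℕ} (hp : 0 < p) (hq : 0 < q) (hd : d = p * q)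
    (hcop : Nat.Coprime q p) (m₂ : Fin q) (w₂ : Fin p) (a b : Fin d)
    {wv mv : ℕ} (hwv : wv < q) (hw0 : wv ≠ 0) (hmv : mv < p)
    (ha : a.val = wv * p + mv) (hb : b.val = mv) :
    matG d q p m₂ w₂ a b = 0 := by
  apply matG_zero_of_ne_mod
  rw [ha, hb]
  exact mod_ne_cross hcop hwv hw0


def phiFun {d p q : ℕ} (hp : 0 < p) (hq : 0 < q) (hd : d = p * q) :
    Idx d p q → (Matrix (Fin d) (Fin d) ℂ →ₗ[ℂ] ℂ)
  | Sum.inl i => entryLM d i i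
  | Sum.inr (Sum.inl t) => entryLM d t.1 ⟨0, by rw [hd]; positivity⟩
  | Sum.inr (Sum.inr (Sum.inl mw)) =>
      entryLM d ⟨mw.2.1.val * p + mw.1.1.val, rep_lt hd mw.2.1.isLt mw.1.1.isLt⟩
          ⟨mw.1.1.val, by have h2 := rep_lt hd mw.2.1.isLt mw.1.1.isLt; omega⟩
        - entryLM d ⟨mw.2.1.val * p, by have h2 := rep_lt hd mw.2.1.isLt hp; omega⟩
          ⟨0, by rw [hd]; positivity⟩
  | Sum.inr (Sum.inr (Sum.inr mw)) =>
      entryLM d ⟨mw.2.1.val * q + mw.1.1.val,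
            rep_lt (hd.trans (Nat.mul_comm p q)) mw.2.1.isLt mw.1.1.isLt⟩
          ⟨mw.1.1.val, by
            have h2 := rep_lt (hd.trans (Nat.mul_comm p q)) mw.2.1.isLt mw.1.1.isLt; omega⟩
        - entryLM d ⟨mw.2.1.val * q, by
            have h2 := rep_lt (hd.trans (Nat.mul_comm p q)) mw.2.1.isLt hq; omega⟩
          ⟨0, by rw [hd]; positivity⟩

lemma phi_bas_eval {d p q : ℕ} (hp : 0 < p) (hq : 0 < q) (hd : d = p * q)
    (hcop : Nat.Coprime p q) (κ ι : Idx d p q) :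
    phiFun hp hq hd κ (bas d p q ι) = if κ = ι then 1 else 0 := by
  have hdq : d = q * p := hd.trans (Nat.mul_comm p q)
  rcases κ with i' | t' | ⟨m', w'⟩ | ⟨m', w'⟩ <;>
    rcases ι with i | t | ⟨m, w⟩ | ⟨m, w⟩
  · -- D/D
    simp only [phiFun, bas, entryLM_apply, matD, Matrix.of_apply, Sum.inl.injEq]
    by_cases h : i' = i
    · simp [h]
    · rw [if_neg (by tauto), if_neg h]
  · -- D/F
    simp only [phiFun, bas, entryLM_apply, matF, Matrix.of_apply]
    rw [if_neg, if_neg (by simp)]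
    intro hdvd
    have h2 : (i'.val:ℤ) - i'.val - t.1.val = 0 :=
      Int.eq_zero_of_abs_lt_dvd hdvd (by have := t.1.isLt; rw [abs_lt]; omega)
    have := t.2
    omega
  · -- D/G
    simp only [phiFun, bas, entryLM_apply]
    rw [matG_diag_zero hq m.1 w.1 w.2 i' i' rfl, if_neg (by simp)]
  · -- D/G'
    simp only [phiFun, bas, entryLM_apply]
    rw [matG_diag_zero hp m.1 w.1 w.2 i' i' rfl, if_neg (by simp)]
  · -- F/D
    simp only [phiFun, bas, entryLM_apply, matD, Matrix.of_apply]
    rw [if_neg, if_neg (by simp)]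
    rintro ⟨h1, h2⟩
    apply t'.2
    have h3 := congrArg Fin.val (h1.trans h2.symm)
    simpa using h3
  · -- F/F
    simp only [phiFun, bas, entryLM_apply, matF, Matrix.of_apply]
    by_cases h : t'.1.val = t.1.val
    · have heq : t' = t := Subtype.ext (Fin.ext h)
      subst heq
      rw [if_pos (by simp), if_pos rfl]
    · have hne1 : ¬((d:ℤ) ∣ ((t'.1.val:ℤ) - ((0:ℕ):ℤ) - (t.1.val:ℤ))) := by
        intro hdvd
        have h2 : (t'.1.val:ℤ) - ((0:ℕ):ℤ) - t.1.val = 0 :=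
          Int.eq_zero_of_abs_lt_dvd hdvd
            (by have := t.1.isLt; have := t'.1.isLt; rw [abs_lt]; push_cast; omega)
        apply h
        push_cast at h2
        omega
      rw [if_neg (by simpa using hne1), if_neg]
      intro hh
      apply h
      have : t' = t := by
        simpa [Sum.inr.injEq, Sum.inl.injEq] using hh
      rw [this]
  · -- F/G
    simp only [phiFun, bas, entryLM_apply]
    rw [matG_zero_of_b m.1 w.1 _ _ (by simpa using Ne.symm m.2), if_neg (by simp)]
  · -- F/G'
    simp only [phiFun, bas, entryLM_apply]
    rw [matG_zero_of_b m.1 w.1 _ _ (by simpa using Ne.symm m.2), if_neg (by simp)]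
  · -- G/D
    simp only [phiFun, bas, LinearMap.sub_apply, entryLM_apply, matD, Matrix.of_apply]
    have hwp : w'.1.val * p ≠ 0 := by
      intro h
      rcases Nat.mul_eq_zero.mp h with h' | h'
      · exact w'.2 h'
      · exact hp.ne' h'
    have hd0 : 0 < d := by rw [hd]; positivity
    have hlt1 : w'.1.val * p + m'.1.val < d := rep_lt hd w'.1.isLt m'.1.isLt
    have hlt2 : m'.1.val < d := by omega
    have hlt3 : w'.1.val * p < d := by omega
    have h1 : ¬((⟨w'.1.val * p + m'.1.val, hlt1⟩ : Fin d) = i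
        ∧ (⟨m'.1.val, hlt2⟩ : Fin d) = i) := by
      rintro ⟨ha, hb⟩
      have h3 := congrArg Fin.val (ha.trans hb.symm)
      simp only at h3
      omega
    have h2 : ¬((⟨w'.1.val * p, hlt3⟩ : Fin d) = i ∧ (⟨0, hd0⟩ : Fin d) = i) := by
      rintro ⟨ha, hb⟩
      have h3 := congrArg Fin.val (ha.trans hb.symm)
      simp only at h3
      exact hwp h3
    rw [if_neg h1, if_neg h2, if_neg (by simp)]
    ring
  · -- G/F
    simp only [phiFun, bas, LinearMap.sub_apply, entryLM_apply, matF, Matrix.of_apply]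
    rw [show ((((w'.1.val * p + m'.1.val : ℕ)):ℤ) - (m'.1.val:ℤ) - (t.1.val:ℤ))
        = (((w'.1.val * p : ℕ):ℤ) - ((0:ℕ):ℤ) - (t.1.val:ℤ)) by push_cast; ring]
    rw [sub_self, if_neg (by simp)]
  · -- G/G (diagonal)
    simp only [phiFun, bas, LinearMap.sub_apply, entryLM_apply]
    rw [G_eval_diag hp hq hd m.1 m'.1 w.1 w'.1 _ _ rfl rfl]
    rw [matG_zero_of_b m.1 w.1 _ _ (by simpa using Ne.symm m.2), sub_zero]
    by_cases h : m'.1.val = m.1.val ∧ w'.1.val = w.1.val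
    · have hm : m' = m := Subtype.ext (Fin.ext h.1)
      have hw : w' = w := Subtype.ext (Fin.ext h.2)
      subst hm; subst hw
      rw [if_pos h, if_pos rfl]
    · rw [if_neg h, if_neg]
      intro hh
      simp only [Sum.inr.injEq, Sum.inl.injEq, Prod.mk.injEq] at hh
      exact h ⟨by rw [hh.1], by rw [hh.2]⟩
  · -- G/G' (cross)
    simp only [phiFun, bas, LinearMap.sub_apply, entryLM_apply]
    rw [G_eval_cross hp hq hd hcop.symm m.1 w.1 _ _ w'.1.isLt w'.2 m'.1.isLt rfl rfl]
    rw [matG_zero_of_b m.1 w.1 _ _ (by simpa using Ne.symm m.2), sub_zero,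
      if_neg (by simp)]
  · -- G'/D
    simp only [phiFun, bas, LinearMap.sub_apply, entryLM_apply, matD, Matrix.of_apply]
    have hwp : w'.1.val * q ≠ 0 := by
      intro h
      rcases Nat.mul_eq_zero.mp h with h' | h'
      · exact w'.2 h'
      · exact hq.ne' h'
    have hd0 : 0 < d := by rw [hd]; positivity
    have hlt1 : w'.1.val * q + m'.1.val < d := rep_lt (hd.trans (Nat.mul_comm p q)) w'.1.isLt m'.1.isLt
    have hlt2 : m'.1.val < d := by omega
    have hlt3 : w'.1.val * q < d := by omega
    have h1 : ¬((⟨w'.1.val * q + m'.1.val, hlt1⟩ : Fin d) = i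
        ∧ (⟨m'.1.val, hlt2⟩ : Fin d) = i) := by
      rintro ⟨ha, hb⟩
      have h3 := congrArg Fin.val (ha.trans hb.symm)
      simp only at h3
      omega
    have h2 : ¬((⟨w'.1.val * q, hlt3⟩ : Fin d) = i ∧ (⟨0, hd0⟩ : Fin d) = i) := by
      rintro ⟨ha, hb⟩
      have h3 := congrArg Fin.val (ha.trans hb.symm)
      simp only at h3
      exact hwp h3
    rw [if_neg h1, if_neg h2, if_neg (by simp)]
    ring
  · -- G'/F
    simp only [phiFun, bas, LinearMap.sub_apply, entryLM_apply, matF, Matrix.of_apply]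
    rw [show ((((w'.1.val * q + m'.1.val : ℕ)):ℤ) - (m'.1.val:ℤ) - (t.1.val:ℤ))
        = (((w'.1.val * q : ℕ):ℤ) - ((0:ℕ):ℤ) - (t.1.val:ℤ)) by push_cast; ring]
    rw [sub_self, if_neg (by simp)]
  · -- G'/G (cross)
    simp only [phiFun, bas, LinearMap.sub_apply, entryLM_apply]
    rw [G_eval_cross hq hp hdq hcop m.1 w.1 _ _ w'.1.isLt w'.2 m'.1.isLt rfl rfl]
    rw [matG_zero_of_b m.1 w.1 _ _ (by simpa using Ne.symm m.2), sub_zero,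
      if_neg (by simp)]
  · -- G'/G' (diagonal)
    simp only [phiFun, bas, LinearMap.sub_apply, entryLM_apply]
    rw [G_eval_diag hq hp hdq m.1 m'.1 w.1 w'.1 _ _ rfl rfl]
    rw [matG_zero_of_b m.1 w.1 _ _ (by simpa using Ne.symm m.2), sub_zero]
    by_cases h : m'.1.val = m.1.val ∧ w'.1.val = w.1.val
    · have hm : m' = m := Subtype.ext (Fin.ext h.1)
      have hw : w' = w := Subtype.ext (Fin.ext h.2)
      subst hm; subst hw
      rw [if_pos h, if_pos rfl]
    · rw [if_neg h, if_neg]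
      intro hh
      simp only [Sum.inr.injEq, Sum.inl.injEq, Prod.mk.injEq] at hh
      exact h ⟨by rw [hh.1], by rw [hh.2]⟩

lemma bas_indep {d p q : ℕ} (hp : 0 < p) (hq : 0 < q) (hd : d = p * q)
    (hcop : Nat.Coprime p q) : LinearIndependent ℂ (bas d p q) := by
  apply LinearIndependent.of_comp (LinearMap.pi (phiFun hp hq hd))
  have hcomp : (⇑(LinearMap.pi (phiFun hp hq hd)) ∘ bas d p q)
      = fun ι => Pi.single ι (1:ℂ) := by
    funext ι
    funext κ
    rw [Function.comp_apply, LinearMap.pi_apply, phi_bas_eval hp hq hd hcop κ ι,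
      Pi.single_apply]
  rw [hcomp]
  have h2 := (Pi.basisFun ℂ (Idx d p q)).linearIndependent
  have h3 : ⇑(Pi.basisFun ℂ (Idx d p q)) = fun ι => Pi.single ι (1:ℂ) :=
    funext fun i => Pi.basisFun_apply ℂ _ i
  rwa [h3] at h2

lemma card_val_ne_zero (n : ℕ) (hn : 0 < n) :
    Fintype.card {t : Fin n // t.val ≠ 0} = n - 1 := by
  have h1 : Fintype.card {t : Fin n // t.val = 0} = 1 := by
    apply Fintype.card_eq_one_iff.mpr
    refine ⟨⟨⟨0, hn⟩, rfl⟩, ?_⟩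
    rintro ⟨t, ht⟩
    apply Subtype.ext
    apply Fin.ext
    simpa using ht
  have h2 := Fintype.card_subtype_compl (fun t : Fin n => t.val = 0)
  rw [h2, h1, Fintype.card_fin]

lemma card_idx {d p q : ℕ} (hp : 0 < p) (hq : 0 < q) (hd : d = p * q) :
    Fintype.card (Idx d p q) = (2 * p - 1) * (2 * q - 1) := by
  have hd0 : 0 < d := by rw [hd]; positivity
  have c1 := card_val_ne_zero d hd0
  have c2 := card_val_ne_zero p hp
  have c3 := card_val_ne_zero q hq
  rw [show Fintype.card (Idx d p q)
      = Fintype.card (Fin d) + (Fintype.card {t : Fin d // t.val ≠ 0}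
        + (Fintype.card {m : Fin p // m.val ≠ 0} * Fintype.card {w : Fin q // w.val ≠ 0}
          + Fintype.card {m : Fin q // m.val ≠ 0} * Fintype.card {w : Fin p // w.val ≠ 0}))
     from by simp [Idx, Fintype.card_sum, Fintype.card_prod]]
  rw [c1, c2, c3, Fintype.card_fin, hd]
  obtain ⟨P, rfl⟩ : ∃ P, p = P + 1 := ⟨p - 1, by omega⟩
  obtain ⟨Q, rfl⟩ : ∃ Q, q = Q + 1 := ⟨q - 1, by omega⟩
  have e1 : (P+1) * (Q+1) = P*Q + P + Q + 1 := by ring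
  have e2 : 2 * (P+1) - 1 = 2*P + 1 := by omega
  have e3 : 2 * (Q+1) - 1 = 2*Q + 1 := by omega
  have e4 : (P+1) - 1 = P := by omega
  have e5 : (Q+1) - 1 = Q := by omega
  rw [e1, e2, e3, e4, e5]
  have e6 : (2*P + 1) * (2*Q + 1) = 4*(P*Q) + 2*P + 2*Q + 1 := by ring
  rw [e6, Nat.mul_comm Q P]
  omega

end S7

/-- For `d = pq` with `p, q` distinct primes, the real span of
`A ∪ B ∪ C ∪ D` has dimension `(2p−1)(2q−1)`. -/
theorem stmt7 (p q d : ℕ) (hp : p.Prime) (hq : q.Prime) (hpq : p ≠ q)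
    (hd : d = p * q) :
    Module.finrank ℝ
        (Submodule.span ℝ (setA d ∪ setB d ∪ setC d p q ∪ setD d p q)) =
      (2 * p - 1) * (2 * q - 1) := by
  have hp0 : 0 < p := hp.pos
  have hq0 : 0 < q := hq.pos
  have hcop : Nat.Coprime p q := (Nat.coprime_primes hp hq).mpr hpq
  have hS : ∀ X ∈ (setA d ∪ setB d ∪ setC d p q ∪ setD d p q), X.IsHermitian := by
    intro X hX
    rcases hX with ((h | h) | h) | h
    · obtain ⟨i, rfl⟩ := h; exact S7.proj_herm d _
    · obtain ⟨j, rfl⟩ := h; exact S7.proj_herm d _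
    · obtain ⟨m, s, rfl⟩ := h; exact S7.proj_herm d _
    · obtain ⟨m, s, rfl⟩ := h; exact S7.proj_herm d _
  rw [S7.bridge _ hS, S7.span_sub d p q hp0 hq0 hd,
    finrank_span_eq_card (S7.bas_indep hp0 hq0 hd hcop)]
  exact S7.card_idx hp0 hq0 hd
end
end

section
/- Let d = pq with p, q distinct primes. Then span_ℝ(A ∪ B ∪ C ∪ D) = KD^r; i.e. a self-adjoint operator on ℂ^d has everywhere-real KD distribution if and only if it is a real linear combination of the projectors in A ∪ B ∪ C ∪ D. -/
open Complex Matrix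
open scoped ComplexOrder

noncomputable section

/-!
Writing `Q i j F = d⁻¹ ∑ k, F i k ω^((k - i) j)`, Fourier inversion on `ℤ_d` shows that a
Hermitian `F` has real KD distribution iff `F a b = F (2a - b) a` for all `a, b`. Iterating this
identity gives `F a b = F (a + c) (b + c)` whenever `gcd(a - b, d) ∣ c` (Bézout).

Split `F` according to the divisor `r = gcd(a - b, d)` of `d = r r'`. The part with gcd exactly `r`
vanishes unless `a ≡ b [MOD r]`, and on the residue class `m` it depends only on
`(b - a) / r mod r'`; a discrete Fourier expansion over `ℤ_r'` then writes it as a real combination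
of the projectors onto the vectors `ψ m s` built from `(r, r')` (`psiPQ d r r'`). Conversely each
such projector satisfies the identity above. For `d = pq` the divisors `pq, 1, p, q` give the
families `A, B, C, D`.
-/

open ComplexConjugate

lemma omega_pow (n k : ℕ) [NeZero n] : omega n ^ k = ZMod.stdAddChar (k : ZMod n) := by
  have h := ZMod.stdAddChar_coe (N := n) k
  push_cast at h
  rw [h, omega, ← Complex.exp_nat_mul]
  ring_nf

lemma ofReal_one_div_sqrt_mul_self (n : ℕ) :
    ((1 / Real.sqrt n : ℝ) : ℂ) * ((1 / Real.sqrt n : ℝ) : ℂ) = (n : ℂ)⁻¹ := by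
  rw [← Complex.ofReal_mul, div_mul_div_comm, one_mul, Real.mul_self_sqrt n.cast_nonneg]
  push_cast
  rw [one_div]

namespace Fin

variable {d r : ℕ}

lemma natCast_val_add_of_dvd (hrd : r ∣ d) (a b : Fin d) :
    (((a + b : Fin d) : ℕ) : ZMod r) = (a : ℕ) + (b : ℕ) := by
  rw [Fin.val_add, ← Nat.cast_add, ZMod.natCast_eq_natCast_iff', Nat.mod_mod_of_dvd _ hrd]

lemma natCast_val_sub_of_dvd (hrd : r ∣ d) (a b : Fin d) :
    (((a - b : Fin d) : ℕ) : ZMod r) = (a : ℕ) - (b : ℕ) := by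
  have hd : ((d : ℕ) : ZMod r) = 0 := (ZMod.natCast_eq_zero_iff d r).mpr hrd
  rw [Fin.sub_def, Fin.val_mk, (ZMod.natCast_eq_natCast_iff' _ _ _).mpr (Nat.mod_mod_of_dvd _ hrd),
    Nat.cast_add, Nat.cast_sub b.2.le, hd]
  ring

lemma natCast_val_neg_of_dvd [NeZero d] (hrd : r ∣ d) (u : Fin d) :
    (((-u : Fin d) : ℕ) : ZMod r) = -((u : ℕ) : ZMod r) := by
  rw [show -u = 0 - u from (zero_sub u).symm, natCast_val_sub_of_dvd hrd, Fin.val_zero,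
    Nat.cast_zero, zero_sub]

lemma natCast_val_ofNat_of_dvd [NeZero d] (hrd : r ∣ d) (n : ℕ) :
    (((Fin.ofNat d n : Fin d) : ℕ) : ZMod r) = n := by
  rw [Fin.val_ofNat, ZMod.natCast_eq_natCast_iff', Nat.mod_mod_of_dvd _ hrd]

lemma eq_of_natCast_val_eq {a b : Fin d} (h : ((a : ℕ) : ZMod d) = (b : ℕ)) : a = b := by
  rw [ZMod.natCast_eq_natCast_iff', Nat.mod_eq_of_lt a.2, Nat.mod_eq_of_lt b.2] at h
  exact Fin.ext h

lemma dvd_val_sub_iff (hrd : r ∣ d) (a b : Fin d) :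
    r ∣ ((a - b : Fin d) : ℕ) ↔ (a : ℕ) % r = (b : ℕ) % r := by
  rw [← ZMod.natCast_eq_zero_iff, natCast_val_sub_of_dvd hrd, sub_eq_zero,
    ZMod.natCast_eq_natCast_iff']

lemma gcd_val_sub_comm [NeZero d] (a b : Fin d) :
    Nat.gcd (a - b : Fin d) d = Nat.gcd (b - a : Fin d) d := by
  rw [← neg_sub a b, Fin.val_neg]
  split_ifs with h
  · rw [h, Fin.val_zero]
  · exact (Nat.gcd_self_sub_left (a - b).2.le).symm

end Fin

section Fourier

variable {n : ℕ} [NeZero n]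

lemma sum_stdAddChar_natCast_val_mul (t : ZMod n) :
    ∑ j : Fin n, ZMod.stdAddChar (((j : ℕ) : ZMod n) * t) = if t = 0 then (n : ℂ) else 0 := by
  have hbij : Function.Bijective fun j : Fin n => ((j : ℕ) : ZMod n) :=
    (Fintype.bijective_iff_injective_and_card _).mpr
      ⟨fun _ _ h => Fin.eq_of_natCast_val_eq h, by simp⟩
  rw [hbij.sum_comp fun x => ZMod.stdAddChar (x * t),
    AddChar.sum_mulShift t (ZMod.isPrimitive_stdAddChar n), ZMod.card]
  split_ifs <;> simp

lemma sum_sum_mul_stdAddChar (g : Fin n → ℂ) (v : Fin n) :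
    ∑ j : Fin n, (∑ k : Fin n, g k * ZMod.stdAddChar (((k : ℕ) : ZMod n) * ((j : ℕ) : ZMod n))) *
      ZMod.stdAddChar (-(((v : ℕ) : ZMod n) * ((j : ℕ) : ZMod n))) = n * g v := by
  simp_rw [Finset.sum_mul, mul_assoc, ← AddChar.map_add_eq_mul]
  rw [Finset.sum_comm]
  simp_rw [← Finset.mul_sum]
  have horth : ∀ k : Fin n, ∑ j : Fin n,
      ZMod.stdAddChar (((k : ℕ) : ZMod n) * ((j : ℕ) : ZMod n) +
        -(((v : ℕ) : ZMod n) * ((j : ℕ) : ZMod n))) =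
        if k = v then (n : ℂ) else 0 := by
    intro k
    simp_rw [show ∀ j : ℕ, ((k : ℕ) : ZMod n) * j + -(((v : ℕ) : ZMod n) * j) =
      (j : ZMod n) * ((k : ℕ) - (v : ℕ)) from fun j => by ring]
    rw [sum_stdAddChar_natCast_val_mul]
    exact if_congr (sub_eq_zero.trans ⟨Fin.eq_of_natCast_val_eq, fun h => h ▸ rfl⟩) rfl rfl
  simp_rw [horth, mul_ite, mul_zero, Finset.sum_ite_eq', Finset.mem_univ, if_true, mul_comm]

lemma eq_zero_of_sum_mul_stdAddChar_eq_zero {g : Fin n → ℂ}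
    (h : ∀ j : Fin n,
      ∑ k : Fin n, g k * ZMod.stdAddChar (((k : ℕ) : ZMod n) * ((j : ℕ) : ZMod n)) = 0) :
    g = 0 := by
  funext v
  have hv := sum_sum_mul_stdAddChar g v
  simp only [h, zero_mul, Finset.sum_const_zero] at hv
  exact (mul_eq_zero.mp hv.symm).resolve_left (Nat.cast_ne_zero.mpr (NeZero.ne n))

end Fourier

def IsReflSymmetric {d : ℕ} (F : Matrix (Fin d) (Fin d) ℂ) : Prop :=
  ∀ a b, F a b = F (a + a - b) a

section KirkwoodDirac

variable {d : ℕ} [NeZero d]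

lemma fourierVec_apply (j i : Fin d) :
    fourierVec d j i =
      ((1 / Real.sqrt d : ℝ) : ℂ) * ZMod.stdAddChar (((i : ℕ) : ZMod d) * ((j : ℕ) : ZMod d)) := by
  rw [fourierVec, omega_pow, Nat.cast_mul]

lemma KDQ_eq_sum (F : Matrix (Fin d) (Fin d) ℂ) (i j : Fin d) :
    KDQ d F i j = (d : ℂ)⁻¹ * ∑ k, F i k *
      ZMod.stdAddChar ((((k : ℕ) : ZMod d) - ((i : ℕ) : ZMod d)) * ((j : ℕ) : ZMod d)) := by
  rw [KDQ, Finset.mul_sum, Finset.mul_sum]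
  refine Finset.sum_congr rfl fun k _ => ?_
  rw [fourierVec_apply, fourierVec_apply, map_mul, Complex.conj_ofReal,
    ← AddChar.map_neg_eq_conj, ← ofReal_one_div_sqrt_mul_self, sub_mul, sub_eq_neg_add,
    AddChar.map_add_eq_mul]
  ring

lemma conj_KDQ {F : Matrix (Fin d) (Fin d) ℂ} (hF : F.IsHermitian) (i j : Fin d) :
    conj (KDQ d F i j) = (d : ℂ)⁻¹ * ∑ k, F (i + i - k) i *
      ZMod.stdAddChar ((((k : ℕ) : ZMod d) - ((i : ℕ) : ZMod d)) * ((j : ℕ) : ZMod d)) := by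
  rw [KDQ_eq_sum, map_mul, map_inv₀, map_natCast, map_sum]
  congr 1
  refine Fintype.sum_equiv (Equiv.subLeft (i + i)) _ _ fun k => ?_
  rw [map_mul, ← AddChar.map_neg_eq_conj, Equiv.subLeft_apply, sub_sub_cancel,
    Fin.natCast_val_sub_of_dvd dvd_rfl, Fin.natCast_val_add_of_dvd dvd_rfl]
  exact congrArg₂ _ (hF.apply k i) (congrArg _ (by ring))

theorem mem_KDr_iff {F : Matrix (Fin d) (Fin d) ℂ} :
    F ∈ KDr d ↔ F.IsHermitian ∧ IsReflSymmetric F := by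
  refine ⟨fun ⟨hF, hreal⟩ => ⟨hF, fun a => ?_⟩, fun ⟨hF, hs⟩ => ⟨hF, fun i j => ?_⟩⟩
  · have hsum : ∀ j : Fin d, ∑ k, (F a k - F (a + a - k) a) *
        ZMod.stdAddChar (((k : ℕ) : ZMod d) * ((j : ℕ) : ZMod d)) = 0 := by
      intro j
      have h := Complex.conj_eq_iff_im.mpr (hreal a j)
      rw [conj_KDQ hF, KDQ_eq_sum] at h
      have h' := mul_left_cancel₀ (inv_ne_zero (Nat.cast_ne_zero.mpr (NeZero.ne d))) h
      calc ∑ k, (F a k - F (a + a - k) a) *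
            ZMod.stdAddChar (((k : ℕ) : ZMod d) * ((j : ℕ) : ZMod d))
          = ZMod.stdAddChar (((a : ℕ) : ZMod d) * ((j : ℕ) : ZMod d)) *
              ∑ k, (F a k - F (a + a - k) a) *
                ZMod.stdAddChar ((((k : ℕ) : ZMod d) - ((a : ℕ) : ZMod d)) * ((j : ℕ) : ZMod d)) := by
            rw [Finset.mul_sum]
            refine Finset.sum_congr rfl fun k _ => ?_
            rw [mul_left_comm, ← AddChar.map_add_eq_mul]
            ring_nf
        _ = 0 := by
            rw [Finset.sum_congr rfl fun k _ => sub_mul (F a k) (F (a + a - k) a) _,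
              Finset.sum_sub_distrib, h', sub_self, mul_zero]
    exact fun b => sub_eq_zero.mp (congrFun (eq_zero_of_sum_mul_stdAddChar_eq_zero hsum) b)
  · rw [← Complex.conj_eq_iff_im, conj_KDQ hF, KDQ_eq_sum]
    simp_rw [← hs i]

end KirkwoodDirac

def kdRealSubmodule (d : ℕ) : Submodule ℝ (Matrix (Fin d) (Fin d) ℂ) where
  carrier := {F | F.IsHermitian ∧ IsReflSymmetric F}
  zero_mem' := ⟨isHermitian_zero, fun _ _ => rfl⟩
  add_mem' := fun ⟨hF, hFs⟩ ⟨hG, hGs⟩ =>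
    ⟨hF.add hG, fun a b => by rw [Matrix.add_apply, Matrix.add_apply, hFs a b, hGs a b]⟩
  smul_mem' := fun c _ ⟨hF, hFs⟩ =>
    ⟨hF.smul (IsSelfAdjoint.all c), fun a b => by
      rw [Matrix.smul_apply, Matrix.smul_apply, hFs a b]⟩

lemma mem_kdRealSubmodule {d : ℕ} {F : Matrix (Fin d) (Fin d) ℂ} :
    F ∈ kdRealSubmodule d ↔ F.IsHermitian ∧ IsReflSymmetric F :=
  Iff.rfl

lemma exists_natCast_eq_mul_of_gcd_dvd {d : ℕ} [NeZero d] {t c : ℕ} (h : Nat.gcd t d ∣ c) :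
    ∃ n : ℕ, (c : ZMod d) = n * t := by
  obtain ⟨k, rfl⟩ := h
  refine ⟨((Nat.gcdA t d * k : ℤ) : ZMod d).val, ?_⟩
  have hB := congrArg (Int.cast : ℤ → ZMod d) (Nat.gcd_eq_gcd_ab t d)
  push_cast [ZMod.natCast_self] at hB
  rw [ZMod.natCast_zmod_val, Nat.cast_mul, hB]
  push_cast
  ring

namespace IsReflSymmetric

variable {d : ℕ} [NeZero d] {F : Matrix (Fin d) (Fin d) ℂ}

lemma apply_add_eq_of_natCast_eq (hF : IsReflSymmetric F) (n : ℕ) {a b c : Fin d}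
    (hc : ((c : ℕ) : ZMod d) = n * (((a : ℕ) : ZMod d) - (b : ℕ))) :
    F a b = F (a + c) (b + c) := by
  induction n generalizing c with
  | zero =>
    obtain rfl : c = 0 := Fin.eq_of_natCast_val_eq (by simpa using hc)
    simp
  | succ n ih =>
    have hc' : (((c - (a - b) : Fin d) : ℕ) : ZMod d) = n * (((a : ℕ) : ZMod d) - (b : ℕ)) := by
      rw [Fin.natCast_val_sub_of_dvd dvd_rfl, Fin.natCast_val_sub_of_dvd dvd_rfl, hc]
      push_cast
      ring
    rw [ih hc', hF]
    exact congrArg₂ F (by abel) (by abel)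

lemma apply_add_eq_of_gcd_dvd (hF : IsReflSymmetric F) {a b c : Fin d}
    (h : Nat.gcd (a - b : Fin d) d ∣ c) : F a b = F (a + c) (b + c) := by
  obtain ⟨n, hn⟩ := exists_natCast_eq_mul_of_gcd_dvd h
  exact hF.apply_add_eq_of_natCast_eq n (by rw [hn, Fin.natCast_val_sub_of_dvd dvd_rfl])

end IsReflSymmetric

section GcdDecomposition

variable {d : ℕ}

def gcdPart (r : ℕ) (F : Matrix (Fin d) (Fin d) ℂ) : Matrix (Fin d) (Fin d) ℂ :=
  Matrix.of fun a b => if Nat.gcd (a - b : Fin d) d = r then F a b else 0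

lemma sum_gcdPart (hd : d ≠ 0) (F : Matrix (Fin d) (Fin d) ℂ) :
    ∑ r ∈ d.divisors, gcdPart r F = F := by
  ext a b
  simp only [Matrix.sum_apply, gcdPart, Matrix.of_apply]
  rw [Finset.sum_ite_eq, if_pos (Nat.mem_divisors.mpr ⟨Nat.gcd_dvd_right _ _, hd⟩)]

lemma gcdPart_mem_kdRealSubmodule [NeZero d] (r : ℕ) {F : Matrix (Fin d) (Fin d) ℂ}
    (hF : F ∈ kdRealSubmodule d) : gcdPart r F ∈ kdRealSubmodule d := by
  refine ⟨?_, fun a b => ?_⟩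
  · ext a b
    simp only [conjTranspose_apply, gcdPart, Matrix.of_apply, Fin.gcd_val_sub_comm b a]
    split_ifs <;> simp [hF.1.apply]
  · simp only [gcdPart, Matrix.of_apply, show a + a - b - a = a - b by abel, ← hF.2 a b]

end GcdDecomposition

lemma proj_apply (d : ℕ) (v : Fin d → ℂ) (a b : Fin d) : proj d v a b = v a * conj (v b) :=
  rfl

lemma proj_isHermitian (d : ℕ) (v : Fin d → ℂ) : (proj d v).IsHermitian := by
  ext a b
  simp [proj_apply, mul_comm]

lemma mod_eq_iff_natCast_eq {r x m : ℕ} (hm : m < r) : x % r = m ↔ (x : ZMod r) = m := by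
  rw [ZMod.natCast_eq_natCast_iff', Nat.mod_eq_of_lt hm]

section Blocks

variable {d r r' : ℕ}

lemma psiPQ_apply [NeZero r'] (m : Fin r) (s : Fin r') (i : Fin d) :
    psiPQ d r r' m s i = if (i : ℕ) % r = m then ((1 / Real.sqrt r' : ℝ) : ℂ) *
      ZMod.stdAddChar (((s : ℕ) : ZMod r') * (((i : ℕ) / r : ℕ) : ZMod r')) else 0 := by
  simp only [psiPQ, omega_pow, Nat.cast_mul]

lemma natCast_eq_mul_div_add_of_mod_eq {R : Type*} [Semiring R] {z m : ℕ} (hzm : z % r = m) :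
    (z : R) = r * ((z / r : ℕ) : R) + m := by
  conv_lhs => rw [← Nat.div_add_mod z r, hzm]
  push_cast
  rfl

lemma natCast_div_eq_of_natCast_eq (hd : d = r * r') (hr : r ≠ 0) {z m : ℕ} {w : ℤ}
    (hzm : z % r = m) (h : (z : ZMod d) = (r : ZMod d) * (w : ZMod d) + m) :
    ((z / r : ℕ) : ZMod r') = w := by
  have h' : ((z : ℤ) : ZMod d) = ((r * w + m : ℤ) : ZMod d) := by push_cast; exact h
  rw [ZMod.intCast_eq_intCast_iff_dvd_sub, natCast_eq_mul_div_add_of_mod_eq hzm, hd,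
    Nat.cast_mul] at h'
  have hdvd : (r : ℤ) * r' ∣ r * (w - (z / r : ℕ)) := by convert h' using 1; ring
  rw [← Int.cast_natCast, ZMod.intCast_eq_intCast_iff_dvd_sub]
  exact Int.dvd_of_mul_dvd_mul_left (by exact_mod_cast hr) hdvd

lemma natCast_mul_val_neg [NeZero r'] (hd : d = r * r') (u : Fin r') :
    ((r * ((-u : Fin r') : ℕ) : ℕ) : ZMod d) = -((r * u : ℕ) : ZMod d) := by
  rw [Fin.val_neg]
  split_ifs with h
  · simp [h]
  · rw [eq_neg_iff_add_eq_zero, ← Nat.cast_add, ← mul_add, Nat.sub_add_cancel u.2.le, ← hd,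
      ZMod.natCast_self]

lemma proj_psiPQ_apply_of_mod_eq [NeZero r'] (hd : d = r * r') (hr : r ≠ 0) {m : Fin r}
    {a b : Fin d} (ha : (a : ℕ) % r = m) (hb : (b : ℕ) % r = m) (s : Fin r') :
    proj d (psiPQ d r r' m s) a b = (r' : ℂ)⁻¹ *
      ZMod.stdAddChar (-((((b - a : Fin d) : ℕ) / r : ℕ) : ZMod r') * ((s : ℕ) : ZMod r')) := by
  have hrd : r ∣ d := ⟨r', hd⟩
  have hdiv := natCast_div_eq_of_natCast_eq hd hr (m := 0)
    (w := (((b : ℕ) / r : ℕ) : ℤ) - (((a : ℕ) / r : ℕ) : ℤ))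
    (Nat.mod_eq_zero_of_dvd ((Fin.dvd_val_sub_iff hrd b a).mpr (hb.trans ha.symm))) (by
      rw [Fin.natCast_val_sub_of_dvd dvd_rfl, natCast_eq_mul_div_add_of_mod_eq ha,
        natCast_eq_mul_div_add_of_mod_eq hb]
      simp only [Int.cast_sub, Int.cast_natCast, Nat.cast_zero]
      ring)
  rw [proj_apply, psiPQ_apply, psiPQ_apply, if_pos ha, if_pos hb, map_mul (starRingEnd ℂ),
    Complex.conj_ofReal, ← AddChar.map_neg_eq_conj, hdiv, ← ofReal_one_div_sqrt_mul_self]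
  have he : ZMod.stdAddChar (((s : ℕ) : ZMod r') * (((a : ℕ) / r : ℕ) : ZMod r')) *
        ZMod.stdAddChar (-(((s : ℕ) : ZMod r') * (((b : ℕ) / r : ℕ) : ZMod r'))) =
      ZMod.stdAddChar (-(((((b : ℕ) / r : ℕ) : ℤ) - (((a : ℕ) / r : ℕ) : ℤ) : ℤ) : ZMod r') *
        ((s : ℕ) : ZMod r')) := by
    rw [← AddChar.map_add_eq_mul]
    simp only [Int.cast_sub, Int.cast_natCast]
    ring_nf
  linear_combination ((1 / Real.sqrt r' : ℝ) : ℂ) * ((1 / Real.sqrt r' : ℝ) : ℂ) * he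

lemma proj_psiPQ_isReflSymmetric (hd : d = r * r') (hr : r ≠ 0) [NeZero r'] (m : Fin r)
    (s : Fin r') : IsReflSymmetric (proj d (psiPQ d r r' m s)) := by
  have hrd : r ∣ d := ⟨r', hd⟩
  have : NeZero d := ⟨hd ▸ mul_ne_zero hr (NeZero.ne r')⟩
  intro a b
  by_cases ha : (a : ℕ) % r = m
  swap
  · simp [proj_apply, psiPQ_apply, ha]
  have hres : ((a + a - b : Fin d) : ℕ) % r = m ↔ (b : ℕ) % r = m := by
    rw [mod_eq_iff_natCast_eq m.2, mod_eq_iff_natCast_eq m.2, Fin.natCast_val_sub_of_dvd hrd,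
      Fin.natCast_val_add_of_dvd hrd, (mod_eq_iff_natCast_eq m.2).mp ha]
    constructor <;> intro h <;> linear_combination -h
  by_cases hb : (b : ℕ) % r = m
  · rw [proj_psiPQ_apply_of_mod_eq hd hr ha hb, proj_psiPQ_apply_of_mod_eq hd hr (hres.mpr hb) ha,
      show a - (a + a - b) = b - a by abel]
  · simp [proj_apply, psiPQ_apply, hb, hres]

lemma proj_psiPQ_mem_kdRealSubmodule (hd : d = r * r') (hr : r ≠ 0) [NeZero r'] (m : Fin r)
    (s : Fin r') : proj d (psiPQ d r r' m s) ∈ kdRealSubmodule d :=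
  ⟨proj_isHermitian d _, proj_psiPQ_isReflSymmetric hd hr m s⟩

lemma apply_eq_apply_ofNat_of_mod_eq [NeZero d] (hd : d = r * r') {H : Matrix (Fin d) (Fin d) ℂ}
    (hH : H ∈ kdRealSubmodule d) (hsupp : ∀ a b, Nat.gcd (a - b : Fin d) d ≠ r → H a b = 0)
    {a b : Fin d} (hab : (a : ℕ) % r = (b : ℕ) % r) :
    H a b = H (Fin.ofNat d ((a : ℕ) % r))
      (Fin.ofNat d ((a : ℕ) % r + r * (((b - a : Fin d) : ℕ) / r))) := by
  have hrd : r ∣ d := ⟨r', hd⟩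
  set x := Fin.ofNat d ((a : ℕ) % r)
  set y := Fin.ofNat d ((a : ℕ) % r + r * (((b - a : Fin d) : ℕ) / r))
  have hxy : x - y = a - b := by
    refine Fin.eq_of_natCast_val_eq ?_
    rw [Fin.natCast_val_sub_of_dvd dvd_rfl, Fin.natCast_val_sub_of_dvd dvd_rfl,
      Fin.natCast_val_ofNat_of_dvd dvd_rfl, Fin.natCast_val_ofNat_of_dvd dvd_rfl,
      Nat.mul_div_cancel' ((Fin.dvd_val_sub_iff hrd b a).mpr hab.symm), Nat.cast_add,
      Fin.natCast_val_sub_of_dvd dvd_rfl]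
    ring
  have hy : y = b + (x - a) := by
    rw [← sub_sub_cancel x y, hxy]
    abel
  rw [hy]
  by_cases hg : Nat.gcd (a - b : Fin d) d = r
  · have hdvd : Nat.gcd (a - b : Fin d) d ∣ ((x - a : Fin d) : ℕ) := by
      rw [hg, Fin.dvd_val_sub_iff hrd, Fin.val_ofNat, Nat.mod_mod_of_dvd _ hrd, Nat.mod_mod]
    exact (hH.2.apply_add_eq_of_gcd_dvd hdvd).trans (by rw [add_sub_cancel])
  · rw [hsupp a b hg, hsupp _ _ (by rwa [show x - (b + (x - a)) = a - b by abel])]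

variable [NeZero d] [NeZero r']

def psiCoeff (r r' : ℕ) [NeZero r'] (H : Matrix (Fin d) (Fin d) ℂ) (m : Fin r) (s : Fin r') : ℂ :=
  ∑ u : Fin r', H (Fin.ofNat d m) (Fin.ofNat d (m + r * u)) *
    ZMod.stdAddChar (((u : ℕ) : ZMod r') * ((s : ℕ) : ZMod r'))

lemma conj_psiCoeff (hd : d = r * r') {H : Matrix (Fin d) (Fin d) ℂ}
    (hH : H ∈ kdRealSubmodule d) (m : Fin r) (s : Fin r') :
    conj (psiCoeff r r' H m s) = psiCoeff r r' H m s := by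
  rw [psiCoeff, map_sum]
  refine Fintype.sum_equiv (Equiv.neg (Fin r')) _ _ fun u => ?_
  rw [map_mul, ← AddChar.map_neg_eq_conj, Equiv.neg_apply, Fin.natCast_val_neg_of_dvd dvd_rfl,
    neg_mul, hH.2 (Fin.ofNat d m)]
  refine congrArg₂ _ ((hH.1.apply _ _).trans (congrArg (H _) (Fin.eq_of_natCast_val_eq ?_))) rfl
  rw [Fin.natCast_val_sub_of_dvd dvd_rfl, Fin.natCast_val_add_of_dvd dvd_rfl]
  simp only [Fin.natCast_val_ofNat_of_dvd dvd_rfl, Nat.cast_add,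
    natCast_mul_val_neg hd]
  ring

lemma sum_psiCoeff_smul_proj_psiPQ (hd : d = r * r') (hr : r ≠ 0) {H : Matrix (Fin d) (Fin d) ℂ}
    (hH : H ∈ kdRealSubmodule d) (hsupp : ∀ a b, Nat.gcd (a - b : Fin d) d ≠ r → H a b = 0) :
    ∑ x : Fin r × Fin r', psiCoeff r r' H x.1 x.2 • proj d (psiPQ d r r' x.1 x.2) = H := by
  have hrd : r ∣ d := ⟨r', hd⟩
  ext a b
  simp only [Matrix.sum_apply, Matrix.smul_apply, smul_eq_mul, Fintype.sum_prod_type]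
  by_cases hab : (a : ℕ) % r = (b : ℕ) % r
  -- Only the block `m₀ = a % r` contributes; Fourier inversion over `ℤ_r'` then picks out `u₀`.
  · set m₀ : Fin r := ⟨(a : ℕ) % r, Nat.mod_lt _ (Nat.pos_of_ne_zero hr)⟩
    have hlt : ((b - a : Fin d) : ℕ) / r < r' :=
      (Nat.div_lt_iff_lt_mul (Nat.pos_of_ne_zero hr)).mpr (by rw [mul_comm, ← hd]; exact Fin.isLt _)
    set u₀ : Fin r' := ⟨((b - a : Fin d) : ℕ) / r, hlt⟩
    rw [Finset.sum_eq_single m₀ (fun m _ hm => Finset.sum_eq_zero fun s _ => by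
        rw [proj_apply, psiPQ_apply, if_neg fun h => hm (Fin.ext h.symm), zero_mul, mul_zero])
      (by simp)]
    simp_rw [proj_psiPQ_apply_of_mod_eq hd hr (m := m₀) rfl hab.symm, mul_left_comm _ (r' : ℂ)⁻¹,
      ← Finset.mul_sum, psiCoeff]
    rw [show ((((b - a : Fin d) : ℕ) / r : ℕ) : ZMod r') = ((u₀ : ℕ) : ZMod r') from rfl]
    simp_rw [neg_mul]
    rw [sum_sum_mul_stdAddChar, inv_mul_cancel_left₀ (Nat.cast_ne_zero.mpr (NeZero.ne r')),
      apply_eq_apply_ofNat_of_mod_eq hd hH hsupp hab]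
  · rw [hsupp a b fun hg => hab ((Fin.dvd_val_sub_iff hrd a b).mp (hg ▸ Nat.gcd_dvd_left _ _))]
    refine Finset.sum_eq_zero fun m _ => Finset.sum_eq_zero fun s _ => ?_
    by_cases ha : (a : ℕ) % r = m
    · rw [proj_apply, psiPQ_apply m s b, if_neg fun hb => hab (ha.trans hb.symm),
        map_zero, mul_zero, mul_zero]
    · rw [proj_apply, psiPQ_apply, if_neg ha, zero_mul, mul_zero]

theorem mem_span_proj_psiPQ (hd : d = r * r') (hr : r ≠ 0) {H : Matrix (Fin d) (Fin d) ℂ}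
    (hH : H ∈ kdRealSubmodule d) (hsupp : ∀ a b, Nat.gcd (a - b : Fin d) d ≠ r → H a b = 0) :
    H ∈ Submodule.span ℝ (Set.range fun x : Fin r × Fin r' => proj d (psiPQ d r r' x.1 x.2)) := by
  rw [← sum_psiCoeff_smul_proj_psiPQ hd hr hH hsupp]
  refine Submodule.sum_mem _ fun x _ => ?_
  rw [← Complex.conj_eq_iff_re.mp (conj_psiCoeff hd hH x.1 x.2), Complex.coe_smul]
  exact Submodule.smul_mem _ _ (Submodule.subset_span ⟨x, rfl⟩)

end Blocks

theorem kdRealSubmodule_le_span {d : ℕ} (hd : d ≠ 0) {S : Set (Matrix (Fin d) (Fin d) ℂ)}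
    (hS : ∀ r r', d = r * r' → ∀ (m : Fin r) (s : Fin r'), proj d (psiPQ d r r' m s) ∈ S) :
    kdRealSubmodule d ≤ Submodule.span ℝ S := by
  have : NeZero d := ⟨hd⟩
  intro F hF
  rw [← sum_gcdPart hd F]
  refine Submodule.sum_mem _ fun r hr => ?_
  obtain ⟨⟨r', hrr'⟩, -⟩ := Nat.mem_divisors.mp hr
  have : NeZero r' := ⟨right_ne_zero_of_mul (hrr' ▸ hd)⟩
  refine Submodule.span_mono ?_ (mem_span_proj_psiPQ hrr' (left_ne_zero_of_mul (hrr' ▸ hd))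
    (gcdPart_mem_kdRealSubmodule r hF) fun a b hab => if_neg hab)
  rintro _ ⟨x, rfl⟩
  exact hS r r' hrr' x.1 x.2

lemma psiPQ_self_one (d : ℕ) (m : Fin d) (s : Fin 1) : psiPQ d d 1 m s = stdVec d m := by
  funext i
  rw [psiPQ, stdVec, Nat.mod_eq_of_lt i.2, Fin.val_eq_zero s, zero_mul, pow_zero, mul_one]
  simp [Fin.val_inj]

lemma psiPQ_one_self (d : ℕ) (m : Fin 1) (s : Fin d) : psiPQ d 1 d m s = fourierVec d s := by
  funext i
  rw [psiPQ, fourierVec, Fin.val_eq_zero m, Nat.mod_one, if_pos rfl, Nat.div_one]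
  ring

lemma setA_subset_kdRealSubmodule {d : ℕ} [NeZero d] : setA d ⊆ kdRealSubmodule d := by
  rintro _ ⟨i, rfl⟩
  rw [← psiPQ_self_one d i 0]
  exact proj_psiPQ_mem_kdRealSubmodule (mul_one d).symm (NeZero.ne d) i 0

lemma setB_subset_kdRealSubmodule {d : ℕ} [NeZero d] : setB d ⊆ kdRealSubmodule d := by
  rintro _ ⟨j, rfl⟩
  rw [← psiPQ_one_self d 0 j]
  exact proj_psiPQ_mem_kdRealSubmodule (one_mul d).symm one_ne_zero 0 j

lemma setC_subset_kdRealSubmodule {d p q : ℕ} [NeZero q] (hd : d = p * q) (hp : p ≠ 0) :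
    setC d p q ⊆ kdRealSubmodule d := by
  rintro _ ⟨m, s, rfl⟩
  exact proj_psiPQ_mem_kdRealSubmodule hd hp m s

lemma setD_subset_kdRealSubmodule {d p q : ℕ} [NeZero p] (hd : d = p * q) (hq : q ≠ 0) :
    setD d p q ⊆ kdRealSubmodule d := by
  rintro _ ⟨m, s, rfl⟩
  exact proj_psiPQ_mem_kdRealSubmodule (hd.trans (mul_comm p q)) hq m s

lemma mul_eq_prime_mul_prime_cases {p q r r' : ℕ} (hp : p.Prime) (hq : q.Prime)
    (h : r * r' = p * q) :
    (r = 1 ∧ r' = p * q) ∨ (r = p ∧ r' = q) ∨ (r = q ∧ r' = p) ∨ (r = p * q ∧ r' = 1) := by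
  obtain ⟨k, l, hk, hl, rfl⟩ := Nat.dvd_mul.mp (Dvd.intro r' h)
  rcases hp.eq_one_or_self_of_dvd k hk with hk | hk <;>
    rcases hq.eq_one_or_self_of_dvd l hl with hl | hl <;> rw [hk, hl] at h ⊢
  · simp_all
  · exact Or.inr (Or.inr (Or.inl ⟨one_mul q, Nat.eq_of_mul_eq_mul_left hq.pos (by linarith)⟩))
  · exact Or.inr (Or.inl ⟨mul_one p, Nat.eq_of_mul_eq_mul_left hp.pos (by linarith)⟩)
  · exact Or.inr (Or.inr (Or.inr ⟨rfl, Nat.eq_of_mul_eq_mul_left (Nat.mul_pos hp.pos hq.pos)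
      (by linarith)⟩))

lemma proj_psiPQ_mem_setA_union_setB_union_setC_union_setD {p q r r' : ℕ} (hp : p.Prime) (hq : q.Prime)
    (hrr : p * q = r * r') (m : Fin r) (s : Fin r') :
    proj (p * q) (psiPQ (p * q) r r' m s) ∈
      setA (p * q) ∪ setB (p * q) ∪ setC (p * q) p q ∪ setD (p * q) p q := by
  rcases mul_eq_prime_mul_prime_cases hp hq hrr.symm with ⟨rfl, rfl⟩ | ⟨rfl, rfl⟩ | ⟨rfl, rfl⟩ |
    ⟨rfl, rfl⟩
  · exact Or.inl (Or.inl (Or.inr ⟨s, by rw [psiPQ_one_self]⟩))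
  · exact Or.inl (Or.inr ⟨m, s, rfl⟩)
  · exact Or.inr ⟨m, s, rfl⟩
  · exact Or.inl (Or.inl (Or.inl ⟨m, by rw [psiPQ_self_one]⟩))

theorem stmt9_general (p q d : ℕ) (hp : p.Prime) (hq : q.Prime)
    (hd : d = p * q) :
    (Submodule.span ℝ (setA d ∪ setB d ∪ setC d p q ∪ setD d p q) :
        Set (Matrix (Fin d) (Fin d) ℂ)) = KDr d := by
  subst hd
  have hd₀ : p * q ≠ 0 := mul_ne_zero hp.ne_zero hq.ne_zero
  have : NeZero (p * q) := ⟨hd₀⟩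
  have : NeZero p := ⟨hp.ne_zero⟩
  have : NeZero q := ⟨hq.ne_zero⟩
  have hspan : Submodule.span ℝ (setA (p * q) ∪ setB (p * q) ∪ setC (p * q) p q ∪ setD (p * q) p q)
      = kdRealSubmodule (p * q) := by
    refine le_antisymm (Submodule.span_le.mpr ?_)
      (kdRealSubmodule_le_span hd₀ fun r r' hrr => proj_psiPQ_mem_setA_union_setB_union_setC_union_setD hp hq hrr)
    exact Set.union_subset (Set.union_subset (Set.union_subset setA_subset_kdRealSubmodule
      setB_subset_kdRealSubmodule) (setC_subset_kdRealSubmodule rfl hp.ne_zero))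
      (setD_subset_kdRealSubmodule rfl hq.ne_zero)
  ext F
  rw [SetLike.mem_coe, hspan, mem_kdRealSubmodule, mem_KDr_iff]

/-- For `d = pq` with `p, q` distinct primes,
`span_ℝ(A ∪ B ∪ C ∪ D) = KD^r`. -/
theorem stmt9 (p q d : ℕ) (hp : p.Prime) (hq : q.Prime) (hpq : p ≠ q)
    (hd : d = p * q) :
    (Submodule.span ℝ (setA d ∪ setB d ∪ setC d p q ∪ setD d p q) :
        Set (Matrix (Fin d) (Fin d) ℂ)) = KDr d :=
  stmt9_general p q d hp hq hd
end
end
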